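/- arXiv:1603.06881 — 7 statements merged into one kernel-verified Lean document; each statement's English description precedes it below -/
import Mathlib

section
/- Let n be even and sufficiently large, and let k = ⌈√n / log log n⌉, so that 2k ≤ n. Let M*_0 ∈ [0,1]^{n×n} be the matrix whose top-right k×k submatrix (rows 1,…,k and columns n−k+1,…,n) is all ones, whose bottom-left k×k submatrix (rows n−k+1,…,n and columns 1,…,k) is all zeros, and all of whose other entries equal 1/2. For a permutation π of [n/2], let P_π(M*_0) be the matrix obtained from M*_0 by applying π simultaneously to its first n/2 rows, to its last n/2 rows, to its first n/2 columns, and to its last n/2 columns, and set C_PC = {P_π(M*_0) : π a permutation of [n/2]}. There is a universal constant c > 0 such that: if an estimator M̂ = M̂(Y) satisfies sup over M* ∈ C_PC ∪ {(1/2)·11ᵀ} of E‖M̂ − M*‖²_F ≤ c·k·√n / log n, then the test which declares 'M* = (1/2)·11ᵀ' when ‖M̂ − (1/2)·11ᵀ‖²_F ≤ k²/16 and declares 'M* ∈ C_PC' otherwise is correct with probability at least 1 − 1/√(log n), both when Y is generated from M* = (1/2)·11ᵀ and when Y is generated from any M* ∈ C_PC. -/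
open MeasureTheory ENNReal

noncomputable section

namespace SSTPaper

/-- Squared Frobenius norm of an `n × n` real matrix (as a function). -/
def frobSq {n : ℕ} (A : Fin n → Fin n → ℝ) : ℝ := ∑ i, ∑ j, (A i j) ^ 2

/-- Trace inner product `⟨A, B⟩ = trace (Aᵀ B)`. -/
def tinner {n : ℕ} (A B : Fin n → Fin n → ℝ) : ℝ := ∑ i, ∑ j, A i j * B i j

/-- The SST class: shifted-skew-symmetric matrices with entries in `[0,1]` that are
`π`-SST for some permutation `π` (where `π` ranks `i` above `j` iff `π j < π i`). -/
def sstClass (n : ℕ) : Set (Fin n → Fin n → ℝ) :=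
  {M | (∀ i j, 0 ≤ M i j ∧ M i j ≤ 1) ∧ (∀ i j, M j i = 1 - M i j) ∧
    ∃ π : Equiv.Perm (Fin n), ∀ i j k : Fin n, π j < π i → M j k ≤ M i k}

/-- The set of SST matrices faithful to a given permutation `π`. -/
def sstOf {n : ℕ} (π : Equiv.Perm (Fin n)) : Set (Fin n → Fin n → ℝ) :=
  {M | (∀ i j, 0 ≤ M i j ∧ M i j ≤ 1) ∧ (∀ i j, M j i = 1 - M i j) ∧
    ∀ i j k : Fin n, π j < π i → M j k ≤ M i k}

/-- Size of the largest indifference set of `M`: the maximal number of identical rows. -/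
def kmaxM {n : ℕ} (M : Fin n → Fin n → ℝ) : ℕ :=
  Finset.univ.sup fun i => Set.ncard {j : Fin n | M j = M i}

/-- Number of indifference sets of `M`: the number of distinct rows. -/
def numSets {n : ℕ} (M : Fin n → Fin n → ℝ) : ℕ := Set.ncard (Set.range M)

/-- SST matrices having an indifference set of size at least `k`. -/
def sstClassK (n k : ℕ) : Set (Fin n → Fin n → ℝ) :=
  {M | M ∈ sstClass n ∧ k ≤ kmaxM M}

/-- SST matrices that respect some indifference-set partition of sizes `k`. -/
def sstClassPart (n s : ℕ) (k : Fin s → ℕ) : Set (Fin n → Fin n → ℝ) :=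
  {M | M ∈ sstClass n ∧ ∃ P : Fin s → Finset (Fin n),
    (∀ a b, a ≠ b → Disjoint (P a) (P b)) ∧ (∀ a, (P a).card = k a) ∧
    (∀ i : Fin n, ∃ a, i ∈ P a) ∧
    ∀ a b : Fin s, ∀ i ∈ P a, ∀ i' ∈ P a, ∀ j ∈ P b, ∀ j' ∈ P b, M i j = M i' j'}

/-- Bernoulli measure on `Bool` with success probability `p`. -/
def bern (p : ℝ) : Measure Bool :=
  (ENNReal.ofReal p) • Measure.dirac true + (ENNReal.ofReal (1 - p)) • Measure.dirac false

/-- The law of the observation matrix `Y`: entries on and above the diagonal independent,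
`P[Y i j = 1] = M i j` for `i < j`, `Y j i = 1 - Y i j` off the diagonal, and fair coin
on the diagonal. -/
def obsMeasure {n : ℕ} (M : Fin n → Fin n → ℝ) : Measure (Fin n → Fin n → ℝ) :=
  Measure.map (fun (ω : Fin n × Fin n → Bool) (i j : Fin n) =>
      if i < j then (if ω (i, j) then (1 : ℝ) else 0)
      else if j < i then 1 - (if ω (j, i) then (1 : ℝ) else 0)
      else (if ω (i, j) then (1 : ℝ) else 0))
    (Measure.pi fun p : Fin n × Fin n => bern (if p.1 = p.2 then 1 / 2 else M p.1 p.2))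

/-- The risk `E ‖M̂(Y) − M*‖²_F` of an estimator. -/
def risk {n : ℕ} (Mhat : (Fin n → Fin n → ℝ) → Fin n → Fin n → ℝ)
    (Mstar : Fin n → Fin n → ℝ) : ℝ≥0∞ :=
  ∫⁻ Y, ENNReal.ofReal (frobSq (Mhat Y - Mstar)) ∂(obsMeasure Mstar)

/-- The `(s, k)`-oracle risk. -/
def oracleRisk (n s : ℕ) (k : Fin s → ℕ) : ℝ≥0∞ :=
  ⨅ (Mhat : (Fin n → Fin n → ℝ) → Fin n → Fin n → ℝ) (_ : Measurable Mhat),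
    ⨆ (Mstar : Fin n → Fin n → ℝ) (_ : Mstar ∈ sstClassPart n s k), risk Mhat Mstar

/-- The global adaptivity index of an estimator. -/
def adaptIndex {n : ℕ} (Mhat : (Fin n → Fin n → ℝ) → Fin n → Fin n → ℝ) : ℝ≥0∞ :=
  ⨆ (s : ℕ) (k : Fin s → ℕ) (_ : ∀ a, 1 ≤ k a) (_ : ∑ a, k a = n) (_ : ∀ a, k a < n),
    (⨆ (Mstar : Fin n → Fin n → ℝ) (_ : Mstar ∈ sstClassPart n s k), risk Mhat Mstar) /
      oracleRisk n s k

/-- Number of wins of item `i`. -/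
def winCount {n : ℕ} (Y : Fin n → Fin n → ℝ) (i : Fin n) : ℝ := ∑ j, Y i j

instance {n : ℕ} : MeasurableSpace (Equiv.Perm (Fin n)) := ⊤

/-- Uniform measure on a (finite) set. -/
def unifOn {α : Type*} [Fintype α] [MeasurableSpace α] (s : Set α) : Measure α :=
  (s.ncard : ℝ≥0∞)⁻¹ • ∑ a ∈ (Set.toFinite s).toFinset, Measure.dirac a

/-- Apply a permutation `π` of `Fin m` simultaneously to the first half and the second
half of `Fin (m + m)`. -/
def liftPerm (m : ℕ) (π : Equiv.Perm (Fin m)) : Equiv.Perm (Fin (m + m)) :=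
  (finSumFinEquiv.symm.trans ((π.sumCongr π).trans finSumFinEquiv))

/-- The base planted-clique matrix `M*₀` with an all-ones `k × k` top-right block, an
all-zeros `k × k` bottom-left block, and all remaining entries `1/2` (here `n = m + m`). -/
def plantedBase (m k : ℕ) : Fin (m + m) → Fin (m + m) → ℝ := fun i j =>
  if (i : ℕ) < k ∧ m + m - k ≤ (j : ℕ) then 1
  else if m + m - k ≤ (i : ℕ) ∧ (j : ℕ) < k then 0
  else 1 / 2

/-- The planted-clique class `C_PC = {P_π(M*₀) : π a permutation of [n/2]}`. -/
def plantedClass (m k : ℕ) : Set (Fin (m + m) → Fin (m + m) → ℝ) :=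
  {A | ∃ π : Equiv.Perm (Fin m),
    A = fun i j => plantedBase m k (liftPerm m π i) (liftPerm m π j)}

/-! Both error probabilities are bounded by Markov's inequality for the squared error of `M̂`.
Under the null, rejecting means `‖M̂ − ½·11ᵀ‖²_F > k²/16`, itself a large error. A planted
matrix `M*` has its `k × k` block of ones, so `‖M* − ½·11ᵀ‖²_F ≥ k²/4`, and by
`‖a + b‖² ≤ 2‖a‖² + 2‖b‖²` accepting the null forces `‖M̂ − M*‖²_F ≥ k²/16`. With `c = 1/32`
both Markov bounds are `√n / (2k log n) ≤ log log n / (2 log n) ≤ 1/√(log n)`, using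
`log y ≤ 2√y` and `k ≥ √n / log log n`. -/

section

open Finset Real

theorem aemeasurable_map_of_countable {α β γ : Type*} [MeasurableSpace α] [MeasurableSpace β]
    [MeasurableSpace γ] [Countable α] [MeasurableSingletonClass α] [MeasurableSingletonClass β]
    {ν : Measure α} {g : α → β} (hg : Measurable g) (f : β → γ) :
    AEMeasurable f (ν.map g) := by
  rw [← ν.sum_smul_dirac, Measure.map_sum hg.aemeasurable]
  refine AEMeasurable.sum_measure fun a => ?_
  rw [Measure.map_smul, Measure.map_dirac]
  exact aemeasurable_dirac.smul_measure _

theorem ofReal_one_sub_le_measure_of_lintegral_le {β : Type*} [MeasurableSpace β]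
    {μ : Measure β} [IsProbabilityMeasure μ] {g : β → ℝ} (hg : AEMeasurable g μ) {a δ : ℝ}
    (ha : 0 < a) (hδ : 0 ≤ δ) (hint : ∫⁻ y, ENNReal.ofReal (g y) ∂μ ≤ ENNReal.ofReal (a * δ))
    {S : Set β} (hS : ∀ y ∉ S, a ≤ g y) :
    ENNReal.ofReal (1 - δ) ≤ μ S := by
  have ha' : ENNReal.ofReal a ≠ 0 := by simpa using ha
  have hcompl : μ Sᶜ ≤ ENNReal.ofReal δ := calc
    μ Sᶜ ≤ μ {y | ENNReal.ofReal a ≤ ENNReal.ofReal (g y)} :=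
      measure_mono fun y hy => ENNReal.ofReal_le_ofReal (hS y hy)
    _ ≤ (∫⁻ y, ENNReal.ofReal (g y) ∂μ) / ENNReal.ofReal a :=
      meas_ge_le_lintegral_div hg.ennreal_ofReal ha' ofReal_ne_top
    _ ≤ ENNReal.ofReal δ * ENNReal.ofReal a / ENNReal.ofReal a := by
      rw [← ENNReal.ofReal_mul hδ, mul_comm δ]; gcongr
    _ = ENNReal.ofReal δ := ENNReal.mul_div_cancel_right ha' ofReal_ne_top
  have hcover : 1 ≤ μ S + μ Sᶜ := by
    simpa using measure_union_le (μ := μ) S Sᶜ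
  calc ENNReal.ofReal (1 - δ) = 1 - ENNReal.ofReal δ := by
        rw [ENNReal.ofReal_sub _ hδ, ENNReal.ofReal_one]
    _ ≤ 1 - μ Sᶜ := by gcongr
    _ ≤ μ S := tsub_le_iff_right.2 hcover

theorem isProbabilityMeasure_bern {p : ℝ} (h0 : 0 ≤ p) (h1 : p ≤ 1) :
    IsProbabilityMeasure (bern p) := by
  constructor
  simp only [bern, Measure.add_apply, Measure.smul_apply, smul_eq_mul, measure_univ, mul_one]
  rw [← ENNReal.ofReal_add h0 (by linarith), add_sub_cancel, ENNReal.ofReal_one]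

theorem isProbabilityMeasure_obsMeasure {n : ℕ} {M : Fin n → Fin n → ℝ}
    (hM : ∀ i j, 0 ≤ M i j ∧ M i j ≤ 1) : IsProbabilityMeasure (obsMeasure M) := by
  have (p : Fin n × Fin n) :
      IsProbabilityMeasure (bern (if p.1 = p.2 then 1 / 2 else M p.1 p.2)) := by
    split_ifs
    · exact isProbabilityMeasure_bern (by norm_num) (by norm_num)
    · exact isProbabilityMeasure_bern (hM p.1 p.2).1 (hM p.1 p.2).2
  exact Measure.isProbabilityMeasure_map Measurable.of_discrete.aemeasurable

-- Estimators need not be measurable; Markov's inequality still applies to them because `Y` takes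
-- finitely many values.
theorem aemeasurable_obsMeasure {n : ℕ} {γ : Type*} [MeasurableSpace γ]
    (M : Fin n → Fin n → ℝ) (f : (Fin n → Fin n → ℝ) → γ) : AEMeasurable f (obsMeasure M) :=
  aemeasurable_map_of_countable Measurable.of_discrete f

theorem frobSq_sub_le {n : ℕ} (A B C : Fin n → Fin n → ℝ) :
    frobSq (A - C) ≤ 2 * frobSq (B - A) + 2 * frobSq (B - C) := by
  simp only [frobSq, Pi.sub_apply, Finset.mul_sum, ← Finset.sum_add_distrib]
  gcongr with i _ j _
  nlinarith [sq_nonneg (B i j - A i j + (B i j - C i j))]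

theorem frobSq_comp_perm {n : ℕ} (σ : Equiv.Perm (Fin n)) (A : Fin n → Fin n → ℝ) :
    frobSq (fun i j => A (σ i) (σ j)) = frobSq A := by
  unfold frobSq
  rw [← Equiv.sum_comp σ (fun i => ∑ j, A i j ^ 2)]
  exact Finset.sum_congr rfl fun i _ => Equiv.sum_comp σ (fun j => A (σ i) j ^ 2)

theorem plantedBase_mem_Icc (m k : ℕ) (i j : Fin (m + m)) :
    0 ≤ plantedBase m k i j ∧ plantedBase m k i j ≤ 1 := by
  unfold plantedBase
  constructor <;> split_ifs <;> norm_num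

theorem card_filter_fin_eq_card_filter_range (n : ℕ) (p : ℕ → Prop) [DecidablePred p] :
    Finset.card {i : Fin n | p i} = Finset.card {t ∈ range n | p t} := by
  rw [← card_map Fin.valEmbedding]
  congr 1
  ext t
  simp only [mem_map, mem_filter, mem_univ, true_and, Fin.valEmbedding_apply, mem_range]
  exact ⟨fun ⟨i, hi, hit⟩ => hit ▸ ⟨i.2, hi⟩, fun ⟨ht, hp⟩ => ⟨⟨t, ht⟩, hp, rfl⟩⟩

theorem sq_div_four_le_frobSq_plantedBase_sub_half {m k : ℕ} (hk : k ≤ m + m) :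
    (k : ℝ) ^ 2 / 4 ≤ frobSq (plantedBase m k - fun _ _ => 1 / 2) := by
  set rows : Finset (Fin (m + m)) := {i | (i : ℕ) < k}
  set cols : Finset (Fin (m + m)) := {j | m + m - k ≤ (j : ℕ)}
  have hrows : rows.card = k := by
    rw [card_filter_fin_eq_card_filter_range _ (· < k), show {t ∈ range (m + m) | t < k} = range k by
      ext; simp; omega, card_range]
  have hcols : cols.card = k := by
    rw [card_filter_fin_eq_card_filter_range _ (m + m - k ≤ ·),
      show {t ∈ range (m + m) | m + m - k ≤ t} = Ico (m + m - k) (m + m) by ext; simp; omega,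
      Nat.card_Ico]
    omega
  calc (k : ℝ) ^ 2 / 4 = ∑ i ∈ rows, ∑ j ∈ cols, (1 / 2 : ℝ) ^ 2 := by
        simp only [sum_const, hrows, hcols, nsmul_eq_mul]
        ring
    _ = ∑ i ∈ rows, ∑ j ∈ cols, (plantedBase m k i j - 1 / 2) ^ 2 := by
        refine Finset.sum_congr rfl fun i hi => Finset.sum_congr rfl fun j hj => ?_
        simp only [rows, cols, Finset.mem_filter, Finset.mem_univ, true_and] at hi hj
        simp only [plantedBase, hi, hj, and_self, ↓reduceIte]
        norm_num
    _ ≤ frobSq (plantedBase m k - fun _ _ => 1 / 2) := by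
        refine (sum_le_sum fun i _ => sum_le_sum_of_subset_of_nonneg (subset_univ cols)
          fun _ _ _ => sq_nonneg _).trans ?_
        exact sum_le_sum_of_subset_of_nonneg (subset_univ rows)
          fun _ _ _ => sum_nonneg fun _ _ => sq_nonneg _

theorem mem_Icc_of_mem_plantedClass {m k : ℕ} {M : Fin (m + m) → Fin (m + m) → ℝ}
    (hM : M ∈ plantedClass m k) (i j : Fin (m + m)) : 0 ≤ M i j ∧ M i j ≤ 1 := by
  obtain ⟨σ, rfl⟩ := hM
  exact plantedBase_mem_Icc m k _ _

theorem sq_div_four_le_frobSq_sub_half_of_mem_plantedClass {m k : ℕ} (hk : k ≤ m + m)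
    {M : Fin (m + m) → Fin (m + m) → ℝ} (hM : M ∈ plantedClass m k) :
    (k : ℝ) ^ 2 / 4 ≤ frobSq (M - fun _ _ => 1 / 2) := by
  obtain ⟨σ, rfl⟩ := hM
  exact (sq_div_four_le_frobSq_plantedBase_sub_half hk).trans_eq
    (frobSq_comp_perm (liftPerm m σ) _).symm

theorem log_le_two_mul_sqrt {y : ℝ} (hy : 0 ≤ y) : log y ≤ 2 * √y := by
  have := log_le_rpow_div hy (ε := 1 / 2) (by norm_num)
  rwa [← sqrt_eq_rpow, div_eq_mul_inv, mul_comm, show (1 / 2 : ℝ)⁻¹ = 2 by norm_num] at this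

theorem one_lt_log_of_three_le {x : ℝ} (hx : 3 ≤ x) : 1 < log x := by
  rw [lt_log_iff_exp_lt (by linarith)]
  linarith [exp_one_lt_d9]

theorem pos_of_sqrt_div_log_log_le {x k : ℝ} (hx : 3 ≤ x) (hk : √x / log (log x) ≤ k) :
    0 < k :=
  (div_pos (sqrt_pos.2 (by linarith)) (log_pos (one_lt_log_of_three_le hx))).trans_le hk

theorem mul_sqrt_div_log_le {x k : ℝ} (hx : 3 ≤ x) (hk : √x / log (log x) ≤ k) :
    k * √x / log x ≤ 2 * k ^ 2 / √(log x) := by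
  have hL := one_lt_log_of_three_le hx
  have hLL : 0 < log (log x) := log_pos hL
  have hk0 := pos_of_sqrt_div_log_log_le hx hk
  have hsqrt : √x ≤ k * log (log x) := (div_le_iff₀ hLL).1 hk
  have hsqL : √(log x) * √(log x) = log x := mul_self_sqrt (by linarith)
  have hsqL0 : 0 < √(log x) := sqrt_pos.2 (by linarith)
  calc k * √x / log x ≤ k * (k * (2 * √(log x))) / log x := by
        gcongr
        exact hsqrt.trans (by gcongr; exact log_le_two_mul_sqrt (by linarith))
    _ = 2 * k ^ 2 / √(log x) := by
        rw [div_eq_div_iff (by linarith) hsqL0.ne']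
        linear_combination (2 * k ^ 2) * hsqL

end

/-- for even `n = m + m` sufficiently large and `k = ⌈√n / log log n⌉` (with
`2k ≤ n`), there is a universal constant `c > 0` such that any estimator whose risk over
`C_PC ∪ {½·11ᵀ}` is at most `c k √n / log n` yields, by thresholding
`‖M̂ − ½·11ᵀ‖²_F` at `k²/16`, a test for the planted clique that is correct with
probability at least `1 − 1/√(log n)` under each hypothesis. -/
theorem planted_clique_reduction :
    ∃ c : ℝ, 0 < c ∧ ∃ N : ℕ, ∀ m : ℕ, N ≤ m + m →
      ∀ k : ℕ,
        k = ⌈Real.sqrt (m + m) / Real.log (Real.log (m + m))⌉₊ →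
        2 * k ≤ m + m →
      ∀ Mhat : (Fin (m + m) → Fin (m + m) → ℝ) → Fin (m + m) → Fin (m + m) → ℝ,
        (∀ Mstar : Fin (m + m) → Fin (m + m) → ℝ,
          (Mstar ∈ plantedClass m k ∨ Mstar = fun _ _ => (1 : ℝ) / 2) →
          (∫⁻ Y, ENNReal.ofReal (frobSq (Mhat Y - Mstar)) ∂(obsMeasure Mstar)) ≤
            ENNReal.ofReal (c * k * Real.sqrt (m + m) / Real.log (m + m))) →
        (ENNReal.ofReal (1 - 1 / Real.sqrt (Real.log (m + m))) ≤
          obsMeasure (fun _ _ => (1 : ℝ) / 2)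
            {Y | frobSq (Mhat Y - fun _ _ => (1 : ℝ) / 2) ≤ (k : ℝ) ^ 2 / 16}) ∧
        ∀ Mstar ∈ plantedClass m k,
          ENNReal.ofReal (1 - 1 / Real.sqrt (Real.log (m + m))) ≤
            obsMeasure Mstar
              {Y | ¬ (frobSq (Mhat Y - fun _ _ => (1 : ℝ) / 2) ≤ (k : ℝ) ^ 2 / 16)} := by
  refine ⟨1 / 32, by norm_num, 3, fun m hm k hk hk2 Mhat hrisk => ?_⟩
  have hn : (3 : ℝ) ≤ m + m := by exact_mod_cast hm
  have hk' : √(m + m) / Real.log (Real.log (m + m)) ≤ k := hk ▸ Nat.le_ceil _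
  have hthreshold : 0 < (k : ℝ) ^ 2 / 16 := by
    have := pos_of_sqrt_div_log_log_le hn hk'
    positivity
  have hδ : 0 ≤ 1 / √(Real.log (m + m)) := by positivity
  have hbound : ENNReal.ofReal (1 / 32 * k * √(m + m) / Real.log (m + m)) ≤
      ENNReal.ofReal ((k : ℝ) ^ 2 / 16 * (1 / √(Real.log (m + m)))) :=
    ENNReal.ofReal_le_ofReal (by linear_combination mul_sqrt_div_log_le hn hk' / 32)
  constructor
  · have := isProbabilityMeasure_obsMeasure fun (_ _ : Fin (m + m)) =>
      (by norm_num : (0 : ℝ) ≤ 1 / 2 ∧ (1 / 2 : ℝ) ≤ 1)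
    exact ofReal_one_sub_le_measure_of_lintegral_le (aemeasurable_obsMeasure _ _) hthreshold hδ
      ((hrisk _ (Or.inr rfl)).trans hbound) fun Y hY => (not_le.1 hY).le
  · intro Mstar hM
    have := isProbabilityMeasure_obsMeasure (mem_Icc_of_mem_plantedClass hM)
    refine ofReal_one_sub_le_measure_of_lintegral_le (aemeasurable_obsMeasure _ _) hthreshold hδ
      ((hrisk _ (Or.inl hM)).trans hbound) fun Y hY => ?_
    have hfar := sq_div_four_le_frobSq_sub_half_of_mem_plantedClass (by omega) hM
    have htriangle := frobSq_sub_le Mstar (Mhat Y) fun _ _ => 1 / 2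
    replace hY : frobSq (Mhat Y - fun _ _ => 1 / 2) ≤ (k : ℝ) ^ 2 / 16 := not_not.1 hY
    linarith

end SSTPaper
end
end

section
/- There is a universal constant c_l > 0 such that for any two indifference-set sizes k₁ ≥ k₂ ≥ 1 with k₁ + k₂ = n, every measurable estimator M̂ = M̂(Y) satisfies sup over M* ∈ C_SST(2,(k₁,k₂)) of E‖M̂ − M*‖²_F ≥ c_l·(n − k₁). -/
open MeasureTheory ENNReal

noncomputable section

namespace SSTPaper

/-!
Assouad's lemma on a hypercube of `2 ^ k₂` hypotheses. Pair the items as `(a, a + k₂)` for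
`a < k₂`; a vertex `θ` picks one item of each pair, and the `k₂` picked items form the lower
indifference set `S_θ` of `M_θ i j = 1/2 + δ (𝟙[j ∈ S_θ] - 𝟙[i ∈ S_θ])`, with `n δ² = 1/16`.
Flipping bit `a` moves the row sum of item `a` by `n δ`, so by Cauchy-Schwarz on that row any
estimate pays `≳ n δ²` under one of the two neighbouring hypotheses. Their observation laws
differ by at most `2 δ` in `O(n)` coins, so the Hellinger affinity of the two product laws is
`≥ 1 - 8 n δ² = 1/2` and no test separates them. Summing over the `k₂` bits gives a risk
`≳ k₂ = n - k₁`.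
-/

open Finset

section FiniteInequalities

variable {Ω : Type*}

lemma sq_sum_sqrt_mul_le_sum_min_mul (s : Finset Ω) {p q : Ω → ℝ}
    (hp : ∀ ω, 0 ≤ p ω) (hq : ∀ ω, 0 ≤ q ω) :
    (∑ ω ∈ s, √(p ω * q ω)) ^ 2 ≤
      (∑ ω ∈ s, min (p ω) (q ω)) * ∑ ω ∈ s, (p ω + q ω) := by
  have hmin : ∀ ω, 0 ≤ min (p ω) (q ω) := fun ω => le_min (hp ω) (hq ω)
  have hmax : ∀ ω, 0 ≤ max (p ω) (q ω) := fun ω => (hp ω).trans (le_max_left _ _)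
  have hcs := Real.sum_sqrt_mul_sqrt_le s hmin hmax
  simp_rw [← Real.sqrt_mul (hmin _), min_mul_max] at hcs
  calc (∑ ω ∈ s, √(p ω * q ω)) ^ 2
      ≤ (√(∑ ω ∈ s, min (p ω) (q ω)) * √(∑ ω ∈ s, max (p ω) (q ω))) ^ 2 :=
        pow_le_pow_left₀ (sum_nonneg fun _ _ => Real.sqrt_nonneg _) hcs 2
    _ = (∑ ω ∈ s, min (p ω) (q ω)) * ∑ ω ∈ s, max (p ω) (q ω) := by
        rw [mul_pow, Real.sq_sqrt (sum_nonneg fun ω _ => hmin ω),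
          Real.sq_sqrt (sum_nonneg fun ω _ => hmax ω)]
    _ ≤ _ := mul_le_mul_of_nonneg_left
        (sum_le_sum fun ω _ => max_le (le_add_of_nonneg_right (hq ω))
          (le_add_of_nonneg_left (hp ω)))
        (sum_nonneg fun ω _ => hmin ω)

lemma mul_sum_min_le_sum_add (s : Finset Ω) {p q f g : Ω → ℝ} {α : ℝ}
    (hp : ∀ ω, 0 ≤ p ω) (hq : ∀ ω, 0 ≤ q ω) (hf : ∀ ω, 0 ≤ f ω) (hg : ∀ ω, 0 ≤ g ω)
    (hfg : ∀ ω, α ≤ f ω + g ω) :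
    α * ∑ ω ∈ s, min (p ω) (q ω) ≤ ∑ ω ∈ s, (p ω * f ω + q ω * g ω) := by
  rw [mul_sum]
  refine sum_le_sum fun ω _ => ?_
  have hm : 0 ≤ min (p ω) (q ω) := le_min (hp ω) (hq ω)
  calc α * min (p ω) (q ω) ≤ min (p ω) (q ω) * f ω + min (p ω) (q ω) * g ω := by
        nlinarith [hfg ω]
    _ ≤ _ := add_le_add (mul_le_mul_of_nonneg_right (min_le_left _ _) (hf ω))
        (mul_le_mul_of_nonneg_right (min_le_right _ _) (hg ω))

lemma one_sub_sum_le_prod_one_sub (s : Finset Ω) {x : Ω → ℝ}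
    (hx : ∀ ω ∈ s, 0 ≤ x ω ∧ x ω ≤ 1) :
    1 - ∑ ω ∈ s, x ω ≤ ∏ ω ∈ s, (1 - x ω) := by
  classical
  induction s using Finset.induction_on with
  | empty => simp
  | insert a s ha ih =>
    have hs : ∀ ω ∈ s, 0 ≤ x ω ∧ x ω ≤ 1 := fun ω hω => hx ω (mem_insert_of_mem hω)
    obtain ⟨ha0, ha1⟩ := hx a (mem_insert_self a s)
    have hsum : 0 ≤ ∑ ω ∈ s, x ω := sum_nonneg fun ω hω => (hs ω hω).1
    have hprod : 0 ≤ ∏ ω ∈ s, (1 - x ω) := prod_nonneg fun ω hω => by linarith [hs ω hω]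
    rw [sum_insert ha, prod_insert ha]
    nlinarith [ih hs]

lemma sq_sum_sub_sum_le (s : Finset Ω) (x y z : Ω → ℝ) :
    (∑ ω ∈ s, y ω - ∑ ω ∈ s, z ω) ^ 2 ≤
      2 * s.card * (∑ ω ∈ s, (x ω - y ω) ^ 2 + ∑ ω ∈ s, (x ω - z ω) ^ 2) := by
  have hy := sq_sum_le_card_mul_sum_sq (s := s) (f := fun ω => x ω - y ω)
  have hz := sq_sum_le_card_mul_sum_sq (s := s) (f := fun ω => x ω - z ω)
  simp only [sum_sub_distrib] at hy hz
  nlinarith [sq_nonneg (∑ ω ∈ s, x ω - ∑ ω ∈ s, y ω + (∑ ω ∈ s, x ω - ∑ ω ∈ s, z ω))]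

end FiniteInequalities

section BernoulliProduct

variable {ι : Type*} [Fintype ι]

def bernWeight (q : ι → ℝ) (ω : ι → Bool) : ℝ :=
  ∏ i, if ω i then q i else 1 - q i

lemma bernWeight_nonneg {q : ι → ℝ} (hq : ∀ i, 0 ≤ q i ∧ q i ≤ 1) (ω : ι → Bool) :
    0 ≤ bernWeight q ω :=
  prod_nonneg fun i _ => by split_ifs <;> linarith [hq i]

lemma sum_bernWeight [DecidableEq ι] (q : ι → ℝ) : ∑ ω, bernWeight q ω = 1 :=
  calc ∑ ω, bernWeight q ω = ∏ i, ∑ b : Bool, (if b then q i else 1 - q i) :=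
        (Fintype.prod_sum fun i (b : Bool) => if b then q i else 1 - q i).symm
    _ = 1 := by simp

lemma sum_sqrt_bernWeight_mul [DecidableEq ι] {q q' : ι → ℝ} (hq : ∀ i, 0 ≤ q i ∧ q i ≤ 1)
    (hq' : ∀ i, 0 ≤ q' i ∧ q' i ≤ 1) :
    ∑ ω, √(bernWeight q ω * bernWeight q' ω) =
      ∏ i, (√(q i * q' i) + √((1 - q i) * (1 - q' i))) := by
  have hfactor : ∀ i (b : Bool),
      0 ≤ (if b then q i else 1 - q i) * (if b then q' i else 1 - q' i) := fun i b => by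
    cases b <;> simp only [Bool.false_eq_true, if_true, if_false] <;>
      nlinarith [hq i, hq' i]
  calc ∑ ω, √(bernWeight q ω * bernWeight q' ω)
      = ∑ ω : ι → Bool, ∏ i, √((if ω i then q i else 1 - q i) *
          (if ω i then q' i else 1 - q' i)) := by
        refine sum_congr rfl fun ω _ => ?_
        rw [bernWeight, bernWeight, ← prod_mul_distrib]
        exact Real.sqrt_prod _ fun i _ => hfactor i (ω i)
    _ = ∏ i, ∑ b : Bool, √((if b then q i else 1 - q i) * (if b then q' i else 1 - q' i)) :=
        (Fintype.prod_sum fun i (b : Bool) =>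
          √((if b then q i else 1 - q i) * (if b then q' i else 1 - q' i))).symm
    _ = _ := by simp

lemma add_sub_sq_div_two_le_sqrt_mul_sqrt {u v : ℝ} (hu : 1 / 4 ≤ u) (hv : 1 / 4 ≤ v) :
    (u + v - (u - v) ^ 2) / 2 ≤ √u * √v := by
  have hsu : √u ^ 2 = u := Real.sq_sqrt (by linarith)
  have hsv : √v ^ 2 = v := Real.sq_sqrt (by linarith)
  have hu2 : 1 / 2 ≤ √u := Real.le_sqrt_of_sq_le (by linarith)
  have hv2 : 1 / 2 ≤ √v := Real.le_sqrt_of_sq_le (by linarith)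
  have key : (√u - √v) ^ 2 ≤ (u - v) ^ 2 :=
    calc (√u - √v) ^ 2 ≤ (√u - √v) ^ 2 * (√u + √v) ^ 2 :=
          le_mul_of_one_le_right (sq_nonneg _) (by nlinarith)
      _ = (√u ^ 2 - √v ^ 2) ^ 2 := by ring
      _ = (u - v) ^ 2 := by rw [hsu, hsv]
  nlinarith

lemma one_sub_sq_le_bernoulli_affinity {a b : ℝ} (ha : 1 / 4 ≤ a ∧ a ≤ 3 / 4)
    (hb : 1 / 4 ≤ b ∧ b ≤ 3 / 4) :
    1 - (a - b) ^ 2 ≤ √(a * b) + √((1 - a) * (1 - b)) := by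
  rw [Real.sqrt_mul (by linarith), Real.sqrt_mul (by linarith)]
  have h1 := add_sub_sq_div_two_le_sqrt_mul_sqrt ha.1 hb.1
  have h2 := add_sub_sq_div_two_le_sqrt_mul_sqrt (u := 1 - a) (v := 1 - b)
    (by linarith) (by linarith)
  nlinarith

lemma one_sub_sum_sq_le_sum_sqrt_bernWeight_mul [DecidableEq ι] {q q' : ι → ℝ}
    (hq : ∀ i, 1 / 4 ≤ q i ∧ q i ≤ 3 / 4) (hq' : ∀ i, 1 / 4 ≤ q' i ∧ q' i ≤ 3 / 4) :
    1 - ∑ i, (q i - q' i) ^ 2 ≤ ∑ ω, √(bernWeight q ω * bernWeight q' ω) := by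
  have hd : ∀ i, 0 ≤ (q i - q' i) ^ 2 ∧ (q i - q' i) ^ 2 ≤ 1 := fun i =>
    ⟨sq_nonneg _, by nlinarith [hq i, hq' i]⟩
  rw [sum_sqrt_bernWeight_mul (fun i => ⟨by linarith [hq i], by linarith [hq i]⟩)
    (fun i => ⟨by linarith [hq' i], by linarith [hq' i]⟩)]
  calc 1 - ∑ i, (q i - q' i) ^ 2 ≤ ∏ i, (1 - (q i - q' i) ^ 2) :=
        one_sub_sum_le_prod_one_sub _ fun i _ => hd i
    _ ≤ _ := prod_le_prod (fun i _ => by linarith [hd i])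
        fun i _ => one_sub_sq_le_bernoulli_affinity (hq i) (hq' i)

lemma sum_min_bernWeight_ge [DecidableEq ι] {q q' : ι → ℝ}
    (hq : ∀ i, 1 / 4 ≤ q i ∧ q i ≤ 3 / 4) (hq' : ∀ i, 1 / 4 ≤ q' i ∧ q' i ≤ 3 / 4) {D : ℝ}
    (hD : ∑ i, (q i - q' i) ^ 2 ≤ D) (hD1 : D ≤ 1) :
    (1 - D) ^ 2 / 2 ≤ ∑ ω, min (bernWeight q ω) (bernWeight q' ω) := by
  have hw := bernWeight_nonneg (q := q) fun i => ⟨by linarith [hq i], by linarith [hq i]⟩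
  have hw' := bernWeight_nonneg (q := q') fun i => ⟨by linarith [hq' i], by linarith [hq' i]⟩
  have hρ := one_sub_sum_sq_le_sum_sqrt_bernWeight_mul hq hq'
  have hcs := sq_sum_sqrt_mul_le_sum_min_mul univ hw hw'
  rw [sum_add_distrib, sum_bernWeight, sum_bernWeight] at hcs
  nlinarith [pow_le_pow_left₀ (by linarith) (hρ.trans' (by linarith : 1 - D ≤ _)) 2]

end BernoulliProduct

section Assouad

variable {ι : Type*} [DecidableEq ι]

def flipBit (a : ι) (θ : ι → Bool) : ι → Bool :=
  Function.update θ a (!θ a)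

lemma flipBit_involutive (a : ι) : Function.Involutive (flipBit a) := fun θ => by
  simp [flipBit]

lemma flipBit_self (a : ι) (θ : ι → Bool) : flipBit a θ a = !θ a :=
  Function.update_self a _ θ

lemma flipBit_of_ne {a b : ι} (h : b ≠ a) (θ : ι → Bool) : flipBit a θ b = θ b :=
  Function.update_of_ne h _ θ

theorem assouad [Fintype ι] {Ω : Type*} [Fintype Ω] (P L : (ι → Bool) → Ω → ℝ)
    (ℓ : ι → (ι → Bool) → Ω → ℝ) {α β : ℝ} (hα : 0 ≤ α)
    (hP : ∀ θ ω, 0 ≤ P θ ω) (hℓ : ∀ a θ ω, 0 ≤ ℓ a θ ω) (hL : ∀ θ ω, ∑ a, ℓ a θ ω ≤ L θ ω)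
    (hsep : ∀ a θ ω, α ≤ ℓ a θ ω + ℓ a (flipBit a θ) ω)
    (haff : ∀ a θ, β ≤ ∑ ω, min (P θ ω) (P (flipBit a θ) ω)) :
    ∃ θ, Fintype.card ι * α * β / 2 ≤ ∑ ω, P θ ω * L θ ω := by
  have hbit : ∀ a, (Fintype.card (ι → Bool) : ℝ) * (α * β) / 2 ≤
      ∑ θ, ∑ ω, P θ ω * ℓ a θ ω := by
    intro a
    set E : (ι → Bool) → ℝ := fun θ => ∑ ω, P θ ω * ℓ a θ ω
    have hflip : ∑ θ, E (flipBit a θ) = ∑ θ, E θ :=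
      (flipBit_involutive a).bijective.sum_comp E
    have hpair : ∀ θ, α * β ≤ E θ + E (flipBit a θ) := fun θ =>
      calc α * β ≤ α * ∑ ω, min (P θ ω) (P (flipBit a θ) ω) :=
            mul_le_mul_of_nonneg_left (haff a θ) hα
        _ ≤ ∑ ω, (P θ ω * ℓ a θ ω + P (flipBit a θ) ω * ℓ a (flipBit a θ) ω) :=
            mul_sum_min_le_sum_add _ (hP θ) (hP _) (hℓ a θ) (hℓ a _) (hsep a θ)
        _ = E θ + E (flipBit a θ) := sum_add_distrib
    have := sum_le_sum fun θ (_ : θ ∈ univ) => hpair θ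
    rw [sum_add_distrib, hflip, sum_const, card_univ, nsmul_eq_mul] at this
    linarith
  have htotal : ∑ _θ : ι → Bool, (Fintype.card ι * α * β / 2 : ℝ) ≤
      ∑ θ, ∑ ω, P θ ω * L θ ω :=
    calc ∑ _θ : ι → Bool, (Fintype.card ι * α * β / 2 : ℝ)
        = ∑ _a : ι, (Fintype.card (ι → Bool) : ℝ) * (α * β) / 2 := by
          simp only [sum_const, card_univ, nsmul_eq_mul]; ring
      _ ≤ ∑ a, ∑ θ, ∑ ω, P θ ω * ℓ a θ ω := sum_le_sum fun a _ => hbit a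
      _ = ∑ θ, ∑ ω, P θ ω * ∑ a, ℓ a θ ω := by
          rw [sum_comm]; refine sum_congr rfl fun θ _ => ?_
          rw [sum_comm]; simp only [mul_sum]
      _ ≤ ∑ θ, ∑ ω, P θ ω * L θ ω :=
          sum_le_sum fun θ _ => sum_le_sum fun ω _ =>
            mul_le_mul_of_nonneg_left (hL θ ω) (hP θ ω)
  obtain ⟨θ, -, hθ⟩ := exists_le_of_sum_le univ_nonempty htotal
  exact ⟨θ, hθ⟩

end Assouad

section Observation

variable {n : ℕ}

def obsMap (n : ℕ) (ω : Fin n × Fin n → Bool) (i j : Fin n) : ℝ :=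
  if i < j then (if ω (i, j) then (1 : ℝ) else 0)
  else if j < i then 1 - (if ω (j, i) then (1 : ℝ) else 0)
  else (if ω (i, j) then (1 : ℝ) else 0)

def coinProb (M : Fin n → Fin n → ℝ) (p : Fin n × Fin n) : ℝ :=
  if p.1 = p.2 then 1 / 2 else M p.1 p.2

lemma obsMeasure_eq_map (M : Fin n → Fin n → ℝ) :
    obsMeasure M = (Measure.pi fun p => bern (coinProb M p)).map (obsMap n) :=
  rfl

instance (p : ℝ) : IsFiniteMeasure (bern p) :=
  ⟨by simp [bern, lt_top_iff_ne_top]⟩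

lemma bern_singleton (p : ℝ) (b : Bool) :
    bern p {b} = ENNReal.ofReal (if b then p else 1 - p) := by
  cases b <;> simp [bern]

lemma pi_bern_singleton {ι : Type*} [Fintype ι] {q : ι → ℝ} (hq : ∀ i, 0 ≤ q i ∧ q i ≤ 1)
    (ω : ι → Bool) :
    Measure.pi (fun i => bern (q i)) {ω} = ENNReal.ofReal (bernWeight q ω) := by
  rw [Measure.pi_singleton, bernWeight, ENNReal.ofReal_prod_of_nonneg fun i _ => by
    split_ifs <;> linarith [hq i]]
  simp only [bern_singleton]

lemma frobSq_nonneg (A : Fin n → Fin n → ℝ) : 0 ≤ frobSq A :=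
  sum_nonneg fun _ _ => sum_nonneg fun _ _ => sq_nonneg _

lemma risk_eq_sum {M : Fin n → Fin n → ℝ} (hM : ∀ i j, 0 ≤ M i j ∧ M i j ≤ 1)
    {Mhat : (Fin n → Fin n → ℝ) → Fin n → Fin n → ℝ} (hMhat : Measurable Mhat) :
    risk Mhat M = ENNReal.ofReal
      (∑ ω, bernWeight (coinProb M) ω * frobSq (Mhat (obsMap n ω) - M)) := by
  have hq : ∀ p, 0 ≤ coinProb M p ∧ coinProb M p ≤ 1 := fun p => by
    unfold coinProb; split_ifs
    · norm_num
    · exact hM _ _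
  have hloss : Measurable fun Y => ENNReal.ofReal (frobSq (Mhat Y - M)) := by
    unfold frobSq; fun_prop
  rw [risk, obsMeasure_eq_map, lintegral_map hloss (measurable_of_countable _), lintegral_fintype,
    ENNReal.ofReal_sum_of_nonneg fun ω _ =>
      mul_nonneg (bernWeight_nonneg hq ω) (frobSq_nonneg _)]
  refine sum_congr rfl fun ω _ => ?_
  rw [pi_bern_singleton hq, ← ENNReal.ofReal_mul (frobSq_nonneg _), mul_comm]

end Observation

section ScoreMatrix

variable {n : ℕ}

def scoreMatrix (s : Fin n → ℝ) (i j : Fin n) : ℝ :=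
  1 / 2 + s j - s i

lemma scoreMatrix_mem_sstClass {s : Fin n → ℝ} (hs : ∀ i, 0 ≤ s i ∧ s i ≤ 1 / 2) :
    scoreMatrix s ∈ sstClass n := by
  refine ⟨fun i j => ?_, fun i j => by unfold scoreMatrix; ring,
    (Tuple.sort (-s)).symm, fun i j k hij => ?_⟩
  · unfold scoreMatrix; constructor <;> linarith [hs i, hs j]
  · have := Tuple.monotone_sort (-s) hij.le
    simp only [Function.comp_apply, Equiv.apply_symm_apply, Pi.neg_apply, neg_le_neg_iff] at this
    unfold scoreMatrix; linarith

lemma coinProb_scoreMatrix (s : Fin n → ℝ) (p : Fin n × Fin n) :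
    coinProb (scoreMatrix s) p = scoreMatrix s p.1 p.2 := by
  unfold coinProb scoreMatrix; split_ifs with h
  · rw [h]; ring
  · rfl

lemma sum_scoreMatrix_row (s : Fin n → ℝ) (i : Fin n) :
    ∑ j, scoreMatrix s i j = n / 2 + ∑ j, s j - n * s i := by
  simp only [scoreMatrix, sum_sub_distrib, sum_add_distrib, sum_const, card_univ,
    Fintype.card_fin, nsmul_eq_mul]
  ring

lemma sum_sq_scoreMatrix_sub_le (s s' : Fin n → ℝ) :
    ∑ i, ∑ j, (scoreMatrix s i j - scoreMatrix s' i j) ^ 2 ≤ 4 * n * ∑ i, (s i - s' i) ^ 2 :=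
  calc ∑ i, ∑ j, (scoreMatrix s i j - scoreMatrix s' i j) ^ 2
      ≤ ∑ i : Fin n, ∑ j, (2 * (s j - s' j) ^ 2 + 2 * (s i - s' i) ^ 2) :=
        sum_le_sum fun i _ => sum_le_sum fun j _ => by
          unfold scoreMatrix; nlinarith [sq_nonneg (s j - s' j + (s i - s' i))]
    _ = 4 * n * ∑ i, (s i - s' i) ^ 2 := by
        simp only [sum_add_distrib, sum_const, card_univ, Fintype.card_fin, nsmul_eq_mul,
          ← mul_sum]
        ring

def blockScore (S : Finset (Fin n)) (δ : ℝ) (i : Fin n) : ℝ :=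
  if i ∈ S then δ else 0

lemma scoreMatrix_blockScore_mem_sstClassPart {S : Finset (Fin n)} {δ : ℝ} (hδ : 0 ≤ δ)
    (hδ' : δ ≤ 1 / 2) {k1 k2 : ℕ} (hS : S.card = k2) (hn : k1 + k2 = n) :
    scoreMatrix (blockScore S δ) ∈ sstClassPart n 2 ![k1, k2] := by
  have hblock : ∀ a : Fin 2, ∀ i ∈ ![Sᶜ, S] a, blockScore S δ i = if a = 1 then δ else 0 := by
    intro a i hi
    fin_cases a <;> simp_all [blockScore]
  refine ⟨scoreMatrix_mem_sstClass fun i => ?_, ![Sᶜ, S], fun a b hab => ?_, fun a => ?_,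
    fun i => ?_, fun a b i hi i' hi' j hj j' hj' => ?_⟩
  · unfold blockScore; split_ifs <;> constructor <;> linarith
  · fin_cases a <;> fin_cases b <;> simp_all [disjoint_compl_left, disjoint_compl_right]
  · fin_cases a <;> simp [card_compl, hS]; omega
  · by_cases hi : i ∈ S
    · exact ⟨1, by simpa using hi⟩
    · exact ⟨0, by simpa using hi⟩
  · simp only [scoreMatrix, hblock a i hi, hblock a i' hi', hblock b j hj, hblock b j' hj']

end ScoreMatrix

section Hypercube

variable {ι : Type*} [Fintype ι] {n : ℕ}

def chosenSet (u v : ι ↪ Fin n) (θ : ι → Bool) : Finset (Fin n) :=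
  univ.image fun a => if θ a then v a else u a

lemma card_chosenSet {u v : ι ↪ Fin n} (huv : ∀ a b, u a ≠ v b) (θ : ι → Bool) :
    (chosenSet u v θ).card = Fintype.card ι := by
  refine card_image_of_injective _ fun a b hab => ?_
  by_cases ha : θ a <;> by_cases hb : θ b <;> simp only [ha, hb] at hab
  · exact v.injective hab
  · exact absurd hab.symm (huv b a)
  · exact absurd hab (huv a b)
  · exact u.injective hab

lemma mem_chosenSet_iff {u v : ι ↪ Fin n} (huv : ∀ a b, u a ≠ v b) (θ : ι → Bool) (a : ι) :
    u a ∈ chosenSet u v θ ↔ θ a = false := by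
  constructor
  · intro h
    obtain ⟨b, -, hb⟩ := mem_image.mp h
    by_cases hθb : θ b
    · rw [if_pos hθb] at hb
      exact absurd hb.symm (huv a b)
    · rw [if_neg hθb, u.injective.eq_iff] at hb
      simpa [hb] using hθb
  · exact fun ha => mem_image.mpr ⟨a, mem_univ a, by simp [ha]⟩

lemma mem_chosenSet_flipBit_iff [DecidableEq ι] (u v : ι ↪ Fin n) (θ : ι → Bool) {a : ι}
    {i : Fin n} (hu : i ≠ u a) (hv : i ≠ v a) :
    i ∈ chosenSet u v (flipBit a θ) ↔ i ∈ chosenSet u v θ := by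
  have hchoice : ∀ b, i = (if flipBit a θ b then v b else u b) ↔
      i = (if θ b then v b else u b) := fun b => by
    by_cases hb : b = a
    · subst hb; by_cases θ b <;> simp_all [flipBit_self]
    · rw [flipBit_of_ne hb]
  simp only [chosenSet, mem_image, mem_univ, true_and, eq_comm (b := i), hchoice]

def hypMatrix (u v : ι ↪ Fin n) (δ : ℝ) (θ : ι → Bool) : Fin n → Fin n → ℝ :=
  scoreMatrix (blockScore (chosenSet u v θ) δ)

lemma coinProb_hypMatrix_mem (u v : ι ↪ Fin n) {δ : ℝ} (hδ : 0 ≤ δ) (hδ' : δ ≤ 1 / 4)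
    (θ : ι → Bool) (p : Fin n × Fin n) :
    1 / 4 ≤ coinProb (hypMatrix u v δ θ) p ∧ coinProb (hypMatrix u v δ θ) p ≤ 3 / 4 := by
  rw [hypMatrix, coinProb_scoreMatrix, scoreMatrix]
  unfold blockScore
  constructor <;> split_ifs <;> linarith

lemma sum_sq_blockScore_flipBit_sub_le [DecidableEq ι] (u v : ι ↪ Fin n) (δ : ℝ)
    (θ : ι → Bool) (a : ι) :
    ∑ i, (blockScore (chosenSet u v θ) δ i - blockScore (chosenSet u v (flipBit a θ)) δ i) ^ 2
      ≤ 2 * δ ^ 2 := by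
  set f := fun i => (blockScore (chosenSet u v θ) δ i -
    blockScore (chosenSet u v (flipBit a θ)) δ i) ^ 2
  have hf : ∀ i, f i ≤ δ ^ 2 := fun i => by
    simp only [f, blockScore]; split_ifs <;> simp [sq_nonneg]
  have hsupp : ∀ i ∈ univ, i ∉ ({u a, v a} : Finset (Fin n)) → f i = 0 := fun i _ hi => by
    simp only [mem_insert, mem_singleton, not_or] at hi
    simp [f, blockScore, mem_chosenSet_flipBit_iff u v θ hi.1 hi.2]
  calc ∑ i, f i = ∑ i ∈ {u a, v a}, f i := (sum_subset (subset_univ _) hsupp).symm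
    _ ≤ ({u a, v a} : Finset (Fin n)).card • δ ^ 2 := sum_le_card_nsmul _ _ _ fun i _ => hf i
    _ ≤ 2 * δ ^ 2 := by
        rw [nsmul_eq_mul]
        exact mul_le_mul_of_nonneg_right (by exact_mod_cast card_le_two) (sq_nonneg δ)

lemma sum_sq_coinProb_hypMatrix_flipBit_sub_le [DecidableEq ι] (u v : ι ↪ Fin n) (δ : ℝ)
    (θ : ι → Bool) (a : ι) :
    ∑ p, (coinProb (hypMatrix u v δ θ) p - coinProb (hypMatrix u v δ (flipBit a θ)) p) ^ 2
      ≤ 8 * n * δ ^ 2 := by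
  simp only [hypMatrix, coinProb_scoreMatrix, Fintype.sum_prod_type]
  calc _ ≤ 4 * n * (2 * δ ^ 2) := (sum_sq_scoreMatrix_sub_le _ _).trans
        (mul_le_mul_of_nonneg_left (sum_sq_blockScore_flipBit_sub_le u v δ θ a) (by positivity))
    _ = 8 * n * δ ^ 2 := by ring

def rowErr (u v : ι ↪ Fin n) (δ : ℝ) (x : Fin n → Fin n → ℝ) (θ : ι → Bool) (a : ι) : ℝ :=
  ∑ j, (x (u a) j - hypMatrix u v δ θ (u a) j) ^ 2

lemma sum_rowErr_le_frobSq (u v : ι ↪ Fin n) (δ : ℝ) (x : Fin n → Fin n → ℝ)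
    (θ : ι → Bool) : ∑ a, rowErr u v δ x θ a ≤ frobSq (x - hypMatrix u v δ θ) := by
  have hrow : ∀ i, 0 ≤ ∑ j, (x i j - hypMatrix u v δ θ i j) ^ 2 := fun i =>
    sum_nonneg fun j _ => sq_nonneg _
  calc ∑ a, rowErr u v δ x θ a = ∑ i ∈ univ.map u, ∑ j, (x i j - hypMatrix u v δ θ i j) ^ 2 :=
        by rw [sum_map]; rfl
    _ ≤ _ := sum_le_univ_sum_of_nonneg hrow

lemma rowErr_add_rowErr_flipBit [DecidableEq ι] {u v : ι ↪ Fin n} (huv : ∀ a b, u a ≠ v b)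
    (δ : ℝ) (x : Fin n → Fin n → ℝ) (θ : ι → Bool) (a : ι) :
    n * δ ^ 2 / 2 ≤ rowErr u v δ x θ a + rowErr u v δ x (flipBit a θ) a := by
  have hrowsum : ∀ θ : ι → Bool, ∑ j, hypMatrix u v δ θ (u a) j =
      n / 2 + Fintype.card ι * δ - n * (if θ a then 0 else δ) := fun θ => by
    rw [hypMatrix, sum_scoreMatrix_row]
    simp only [blockScore, sum_ite_mem, univ_inter, sum_const, card_chosenSet huv,
      nsmul_eq_mul, mem_chosenSet_iff huv]
    by_cases θ a <;> simp_all
  have hgap : (∑ j, hypMatrix u v δ θ (u a) j - ∑ j, hypMatrix u v δ (flipBit a θ) (u a) j) ^ 2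
      = n ^ 2 * δ ^ 2 := by
    rw [hrowsum, hrowsum, flipBit_self]
    by_cases θ a <;> simp_all <;> ring
  have hcs := sq_sum_sub_sum_le univ (x (u a)) (hypMatrix u v δ θ (u a))
    (hypMatrix u v δ (flipBit a θ) (u a))
  rw [hgap, card_univ, Fintype.card_fin] at hcs
  have hnonneg : 0 ≤ rowErr u v δ x θ a + rowErr u v δ x (flipBit a θ) a := by
    unfold rowErr; positivity
  rcases n.eq_zero_or_pos with hn | hn
  · simp [hn, hnonneg]
  · have hn' : (0 : ℝ) < n := Nat.cast_pos.mpr hn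
    unfold rowErr
    nlinarith

theorem exists_hypMatrix_expected_loss_ge [DecidableEq ι] {u v : ι ↪ Fin n}
    (huv : ∀ a b, u a ≠ v b) {δ : ℝ} (hδ : 0 ≤ δ) (hδ' : δ ≤ 1 / 4) (hnδ : 8 * n * δ ^ 2 ≤ 1)
    (Mhat : (Fin n → Fin n → ℝ) → Fin n → Fin n → ℝ) :
    ∃ θ, Fintype.card ι * (n * δ ^ 2) * (1 - 8 * n * δ ^ 2) ^ 2 / 8 ≤
      ∑ ω, bernWeight (coinProb (hypMatrix u v δ θ)) ω *
        frobSq (Mhat (obsMap n ω) - hypMatrix u v δ θ) := by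
  have hq := coinProb_hypMatrix_mem u v hδ hδ'
  obtain ⟨θ, hθ⟩ := assouad (α := n * δ ^ 2 / 2) (β := (1 - 8 * n * δ ^ 2) ^ 2 / 2)
    (fun θ => bernWeight (coinProb (hypMatrix u v δ θ)))
    (fun θ ω => frobSq (Mhat (obsMap n ω) - hypMatrix u v δ θ))
    (fun a θ ω => rowErr u v δ (Mhat (obsMap n ω)) θ a) (by positivity)
    (fun θ => bernWeight_nonneg fun p => ⟨by linarith [hq θ p], by linarith [hq θ p]⟩)
    (fun a θ ω => sum_nonneg fun j _ => sq_nonneg _)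
    (fun θ ω => sum_rowErr_le_frobSq u v δ _ θ)
    (fun a θ ω => rowErr_add_rowErr_flipBit huv δ _ θ a)
    (fun a θ => sum_min_bernWeight_ge (hq θ) (hq (flipBit a θ))
      (sum_sq_coinProb_hypMatrix_flipBit_sub_le u v δ θ a) hnδ)
  exact ⟨θ, by linarith⟩

end Hypercube

lemma exists_embeddings_ne {k n : ℕ} (h : 2 * k ≤ n) :
    ∃ u v : Fin k ↪ Fin n, ∀ a b, u a ≠ v b := by
  refine ⟨⟨fun a => ⟨a, by omega⟩, fun a b hab => by simpa [Fin.ext_iff] using hab⟩,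
    ⟨fun a => ⟨a + k, by omega⟩, fun a b hab => by simpa [Fin.ext_iff] using hab⟩,
    fun a b => Fin.ne_of_val_ne ?_⟩
  show (a : ℕ) ≠ b + k
  omega

/-- minimax lower bound with two indifference sets: for sizes
`k₁ ≥ k₂ ≥ 1` with `k₁ + k₂ = n`, every measurable estimator has worst-case risk over
`C_SST(2, (k₁, k₂))` at least `c_l (n − k₁)`. -/
theorem two_set_lower_bound :
    ∃ cl : ℝ, 0 < cl ∧ ∃ N : ℕ, ∀ n : ℕ, N ≤ n →
      ∀ k1 k2 : ℕ, 1 ≤ k2 → k2 ≤ k1 → k1 + k2 = n →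
      ∀ Mhat : (Fin n → Fin n → ℝ) → Fin n → Fin n → ℝ, Measurable Mhat →
        ENNReal.ofReal (cl * ((n : ℝ) - k1)) ≤
          ⨆ (Mstar : Fin n → Fin n → ℝ) (_ : Mstar ∈ sstClassPart n 2 ![k1, k2]),
            risk Mhat Mstar := by
  refine ⟨1 / 512, by norm_num, 0, fun n _ k1 k2 hk2 hk21 hn Mhat hMhat => ?_⟩
  obtain ⟨u, v, huv⟩ := exists_embeddings_ne (k := k2) (n := n) (by omega)
  have hn1 : (1 : ℝ) ≤ n := by exact_mod_cast (by omega : 1 ≤ n)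
  set δ : ℝ := (4 * √n)⁻¹
  have hδ : 0 ≤ δ := by positivity
  have hδ' : δ ≤ 1 / 4 := by
    rw [inv_le_comm₀ (by positivity) (by norm_num)]
    nlinarith [Real.one_le_sqrt.mpr hn1]
  have hnδ : n * δ ^ 2 = 1 / 16 := by
    rw [inv_pow, mul_pow, Real.sq_sqrt (by linarith)]
    field_simp
    norm_num
  obtain ⟨θ, hθ⟩ := exists_hypMatrix_expected_loss_ge huv hδ hδ' (by linarith) Mhat
  have hmem := scoreMatrix_blockScore_mem_sstClassPart hδ (by linarith)
    ((card_chosenSet huv θ).trans (Fintype.card_fin k2)) hn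
  have hk : (n : ℝ) - k1 = k2 := by rw [← hn]; push_cast; ring
  rw [mul_assoc, hnδ, show 8 * (n : ℝ) * δ ^ 2 = 1 / 2 by linarith, Fintype.card_fin] at hθ
  calc ENNReal.ofReal (1 / 512 * ((n : ℝ) - k1))
      ≤ ENNReal.ofReal (∑ ω, bernWeight (coinProb (hypMatrix u v δ θ)) ω *
          frobSq (Mhat (obsMap n ω) - hypMatrix u v δ θ)) :=
        ENNReal.ofReal_le_ofReal (by rw [hk]; linarith)
    _ = risk Mhat (hypMatrix u v δ θ) := (risk_eq_sum hmem.1.1 hMhat).symm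
    _ ≤ _ := le_iSup₂ (f := fun Mstar (_ : Mstar ∈ sstClassPart n 2 ![k1, k2]) =>
        risk Mhat Mstar) _ hmem

end SSTPaper
end
end

section
/- Let Y ∈ {0,1}^{n×n} be any matrix satisfying Y_{ji} = 1 − Y_{ij} for all i ≠ j. Then every least squares estimate M̂_LS ∈ argmin over M ∈ C_SST of ‖Y − M‖²_F satisfies the Pythagorean identity ‖Y − (1/2)·11ᵀ‖²_F = ‖Y − M̂_LS‖²_F + ‖(1/2)·11ᵀ − M̂_LS‖²_F. -/
open MeasureTheory ENNReal

noncomputable section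

namespace SSTPaper

/-!
The identity is the law of cosines once `⟨Y - M̂, ½·11ᵀ - M̂⟩ = 0`. The entrywise map
`x ↦ ½ + c (x - ½)`, clipped to `[0, 1]`, is nondecreasing and commutes with `x ↦ 1 - x` for
every `c ≥ 0`, so it keeps `M̂` in `C_SST`. First-order optimality of `M̂` along `c = 1 - t` and
`c = 1 + t`, `t ↓ 0`, gives the two inequalities. When stretching, the entries equal to `0` or `1`
do not move; for them the sign of `(Y - M̂)(½ - M̂)` is fixed by `Y ∈ [0, 1]` alone.
-/

open Set Filter Topology

theorem frobSq_sub_smul {n : ℕ} (A B : Fin n → Fin n → ℝ) (t : ℝ) :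
    frobSq (A - t • B) = frobSq A - 2 * t * tinner A B + t ^ 2 * frobSq B := by
  simp only [frobSq, tinner, Pi.sub_apply, Pi.smul_apply, smul_eq_mul, Finset.mul_sum,
    ← Finset.sum_sub_distrib, ← Finset.sum_add_distrib]
  exact Finset.sum_congr rfl fun i _ => Finset.sum_congr rfl fun j _ => by ring

theorem frobSq_sub_eq_add_sub_tinner {n : ℕ} (A B C : Fin n → Fin n → ℝ) :
    frobSq (A - C) = frobSq (A - B) + frobSq (C - B) - 2 * tinner (A - B) (C - B) := by
  simp only [frobSq, tinner, Pi.sub_apply, Finset.mul_sum, ← Finset.sum_sub_distrib,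
    ← Finset.sum_add_distrib]
  exact Finset.sum_congr rfl fun i _ => Finset.sum_congr rfl fun j _ => by ring

theorem tinner_add_right {n : ℕ} (A B C : Fin n → Fin n → ℝ) :
    tinner A (B + C) = tinner A B + tinner A C := by
  simp only [tinner, Pi.add_apply, mul_add, Finset.sum_add_distrib]

theorem tinner_nonpos_of_isMinOn {n : ℕ} {S : Set (Fin n → Fin n → ℝ)}
    {Y M Δ : Fin n → Fin n → ℝ} (hmin : IsMinOn (fun M => frobSq (Y - M)) S M)
    (hΔ : ∀ᶠ t in 𝓝[>] (0 : ℝ), M + t • Δ ∈ S) :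
    tinner (Y - M) Δ ≤ 0 := by
  have hle : ∀ᶠ t in 𝓝[>] (0 : ℝ), 2 * tinner (Y - M) Δ ≤ t * frobSq Δ := by
    filter_upwards [hΔ, self_mem_nhdsWithin] with t hmem (ht : 0 < t)
    have h := isMinOn_iff.1 hmin _ hmem
    rw [← sub_sub, frobSq_sub_smul] at h
    nlinarith
  have hlim : Tendsto (fun t : ℝ => t * frobSq Δ) (𝓝[>] 0) (𝓝 0) :=
    ((continuous_id.mul continuous_const).tendsto' 0 0 (zero_mul _)).mono_left
      nhdsWithin_le_nhds
  linarith [ge_of_tendsto hlim hle]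

theorem comp_mem_sstClass {n : ℕ} {M : Fin n → Fin n → ℝ} {g : ℝ → ℝ} (hg : Monotone g)
    (hg_one_sub : ∀ x, g (1 - x) = 1 - g x) (hg_Icc : MapsTo g (Icc 0 1) (Icc 0 1))
    (hM : M ∈ sstClass n) : (fun i j => g (M i j)) ∈ sstClass n := by
  obtain ⟨hM01, hskew, π, hπ⟩ := hM
  exact ⟨fun i j => hg_Icc (hM01 i j), fun i j => by simp only [hskew i j, hg_one_sub],
    π, fun i j k h => hg (hπ i j k h)⟩

def dilate (c x : ℝ) : ℝ := max 0 (min 1 (1 / 2 + c * (x - 1 / 2)))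

theorem dilate_mem_Icc (c x : ℝ) : dilate c x ∈ Icc (0 : ℝ) 1 :=
  ⟨le_max_left _ _, max_le zero_le_one (min_le_left _ _)⟩

theorem monotone_dilate {c : ℝ} (hc : 0 ≤ c) : Monotone (dilate c) := fun x y hxy => by
  unfold dilate
  gcongr

theorem dilate_one_sub (c x : ℝ) : dilate c (1 - x) = 1 - dilate c x := by
  unfold dilate
  rw [show 1 / 2 + c * (1 - x - 1 / 2) = 1 - (1 / 2 + c * (x - 1 / 2)) by ring]
  generalize 1 / 2 + c * (x - 1 / 2) = u
  simp only [max_def, min_def]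
  split_ifs <;> linarith

theorem dilate_eq_of_mem_Icc {c x : ℝ} (h : 1 / 2 + c * (x - 1 / 2) ∈ Icc (0 : ℝ) 1) :
    dilate c x = 1 / 2 + c * (x - 1 / 2) := by
  rw [dilate, min_eq_right h.2, max_eq_right h.1]

theorem dilate_mem_sstClass {n : ℕ} {M : Fin n → Fin n → ℝ} {c : ℝ} (hc : 0 ≤ c)
    (hM : M ∈ sstClass n) : (fun i j => dilate c (M i j)) ∈ sstClass n :=
  comp_mem_sstClass (monotone_dilate hc) (dilate_one_sub c) (fun x _ => dilate_mem_Icc c x) hM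

/-- The right derivative of `c ↦ dilate c x` at `c = 1`. -/
def dilateSlope (x : ℝ) : ℝ := if x ∈ Ioo (0 : ℝ) 1 then x - 1 / 2 else 0

theorem eventually_dilate_one_add_eq {x : ℝ} (hx : x ∈ Icc (0 : ℝ) 1) :
    ∀ᶠ t in 𝓝[>] (0 : ℝ), dilate (1 + t) x = x + t * dilateSlope x := by
  by_cases hx' : x ∈ Ioo (0 : ℝ) 1
  · have hcont : Tendsto (fun t : ℝ => 1 / 2 + (1 + t) * (x - 1 / 2)) (𝓝 0) (𝓝 x) :=
      Continuous.tendsto' (by fun_prop) 0 x (by ring)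
    filter_upwards [nhdsWithin_le_nhds (hcont.eventually (Ioo_mem_nhds hx'.1 hx'.2))] with t ht
    rw [dilateSlope, if_pos hx', dilate_eq_of_mem_Icc (Ioo_subset_Icc_self ht)]
    ring
  · have hx01 : x ∈ Icc (0 : ℝ) 1 \ Ioo 0 1 := ⟨hx, hx'⟩
    rw [Icc_sdiff_Ioo_same zero_le_one] at hx01
    filter_upwards [self_mem_nhdsWithin] with t (ht : 0 < t)
    rw [dilateSlope, if_neg hx', mul_zero, add_zero, dilate]
    rcases hx01 with rfl | rfl
    · rw [min_eq_right (by linarith), max_eq_left (by linarith)]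
    · rw [min_eq_left (by linarith), max_eq_right zero_le_one]

theorem mul_half_sub_add_dilateSlope_nonneg {x y : ℝ} (hx : x ∈ Icc (0 : ℝ) 1)
    (hy : y ∈ Icc (0 : ℝ) 1) : 0 ≤ (y - x) * (1 / 2 - x + dilateSlope x) := by
  unfold dilateSlope
  split_ifs with hx'
  · simp
  · have hx01 : x ∈ Icc (0 : ℝ) 1 \ Ioo 0 1 := ⟨hx, hx'⟩
    rw [Icc_sdiff_Ioo_same zero_le_one] at hx01
    rcases hx01 with rfl | rfl <;> nlinarith [hy.1, hy.2]

section LeastSquares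

variable {n : ℕ} {Y M : Fin n → Fin n → ℝ}

theorem tinner_sub_half_nonpos (hmin : IsMinOn (fun M => frobSq (Y - M)) (sstClass n) M)
    (hM : M ∈ sstClass n) : tinner (Y - M) ((fun _ _ => 1 / 2) - M) ≤ 0 := by
  refine tinner_nonpos_of_isMinOn hmin ?_
  filter_upwards [Ioo_mem_nhdsGT one_pos] with t ht
  convert dilate_mem_sstClass (sub_nonneg.2 ht.2.le) hM using 1
  ext i j
  rw [dilate_eq_of_mem_Icc]
  · simp only [Pi.add_apply, Pi.smul_apply, Pi.sub_apply, smul_eq_mul]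
    ring
  · obtain ⟨h0, h1⟩ := hM.1 i j
    constructor <;> nlinarith [ht.1, ht.2]

theorem tinner_sub_half_nonneg (hmin : IsMinOn (fun M => frobSq (Y - M)) (sstClass n) M)
    (hM : M ∈ sstClass n) (hY : ∀ i j, Y i j ∈ Icc (0 : ℝ) 1) :
    0 ≤ tinner (Y - M) ((fun _ _ => 1 / 2) - M) := by
  have hslope : tinner (Y - M) (fun i j => dilateSlope (M i j)) ≤ 0 := by
    refine tinner_nonpos_of_isMinOn hmin ?_
    filter_upwards [eventually_all.2 fun i => eventually_all.2 fun j =>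
      eventually_dilate_one_add_eq (hM.1 i j), self_mem_nhdsWithin] with t ht (ht0 : 0 < t)
    convert dilate_mem_sstClass (by linarith : (0 : ℝ) ≤ 1 + t) hM using 1
    ext i j
    exact (ht i j).symm
  have hsum : 0 ≤ tinner (Y - M) (((fun _ _ => 1 / 2) - M) + fun i j => dilateSlope (M i j)) :=
    Finset.sum_nonneg fun i _ => Finset.sum_nonneg fun j _ =>
      mul_half_sub_add_dilateSlope_nonneg (hM.1 i j) (hY i j)
  linarith [tinner_add_right (Y - M) ((fun _ _ => 1 / 2) - M) fun i j => dilateSlope (M i j)]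

end LeastSquares

theorem ls_pythagoras_general {n : ℕ}
    (Y : Fin n → Fin n → ℝ)
    (hY01 : ∀ i j, Y i j = 0 ∨ Y i j = 1)
    (Mls : Fin n → Fin n → ℝ)
    (hmem : Mls ∈ sstClass n)
    (hmin : ∀ M ∈ sstClass n, frobSq (Y - Mls) ≤ frobSq (Y - M)) :
    frobSq (Y - fun _ _ => (1 : ℝ) / 2) =
      frobSq (Y - Mls) + frobSq ((fun _ _ => (1 : ℝ) / 2) - Mls) := by
  have hmin' : IsMinOn (fun M => frobSq (Y - M)) (sstClass n) Mls := isMinOn_iff.2 hmin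
  have hY : ∀ i j, Y i j ∈ Icc (0 : ℝ) 1 := fun i j => by
    rcases hY01 i j with h | h <;> simp [h]
  have horth : tinner (Y - Mls) ((fun _ _ => 1 / 2) - Mls) = 0 :=
    le_antisymm (tinner_sub_half_nonpos hmin' hmem) (tinner_sub_half_nonneg hmin' hmem hY)
  rw [frobSq_sub_eq_add_sub_tinner Y Mls, horth, mul_zero, sub_zero]

/-- Pythagorean identity for the least squares estimator: for any binary
matrix `Y` with `Y j i = 1 − Y i j` off the diagonal, every minimizer of `‖Y − M‖²_F` over
`C_SST` satisfies `‖Y − ½·11ᵀ‖²_F = ‖Y − M̂_LS‖²_F + ‖½·11ᵀ − M̂_LS‖²_F`. -/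
theorem ls_pythagoras {n : ℕ} (hn : 2 ≤ n)
    (Y : Fin n → Fin n → ℝ)
    (hY01 : ∀ i j, Y i j = 0 ∨ Y i j = 1)
    (hYskew : ∀ i j : Fin n, i ≠ j → Y j i = 1 - Y i j)
    (Mls : Fin n → Fin n → ℝ)
    (hmem : Mls ∈ sstClass n)
    (hmin : ∀ M ∈ sstClass n, frobSq (Y - Mls) ≤ frobSq (Y - M)) :
    frobSq (Y - fun _ _ => (1 : ℝ) / 2) =
      frobSq (Y - Mls) + frobSq ((fun _ _ => (1 : ℝ) / 2) - Mls) :=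
  ls_pythagoras_general Y hY01 Mls hmem hmin

end SSTPaper
end
end

section
/- For every M* ∈ C_SST, the all-half matrix satisfies ‖M* − (1/2)·11ᵀ‖²_F ≤ 3·n·(n − k_max(M*) + 1). -/
open MeasureTheory ENNReal

noncomputable section

namespace SSTPaper

/-- for every `M* ∈ C_SST`, `‖M* − ½·11ᵀ‖²_F ≤ 3 n (n − k_max(M*) + 1)`. -/
theorem half_matrix_distance {n : ℕ} (hn : 2 ≤ n)
    (Mstar : Fin n → Fin n → ℝ) (hM : Mstar ∈ sstClass n) :
    frobSq (Mstar - fun _ _ => (1 : ℝ) / 2) ≤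
      3 * (n : ℝ) * ((n : ℝ) - kmaxM Mstar + 1) := by
  classical
  obtain ⟨i0, -, hsup⟩ := Finset.exists_mem_eq_sup (Finset.univ : Finset (Fin n))
    ⟨⟨0, by omega⟩, Finset.mem_univ _⟩
    (fun i => Set.ncard {j : Fin n | Mstar j = Mstar i})
  set Sf : Finset (Fin n) := Finset.univ.filter (fun j => Mstar j = Mstar i0) with hSf
  have hk : kmaxM Mstar = Sf.card := by
    rw [kmaxM, hsup, ← Set.ncard_coe_finset]
    congr 1
    ext j; simp [hSf]
  have hkn : Sf.card ≤ n := by simpa using Finset.card_le_univ Sf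
  have hhalf : ∀ i ∈ Sf, ∀ j ∈ Sf, Mstar i j = 1 / 2 := by
    intro i hi j hj
    simp only [hSf, Finset.mem_filter, Finset.mem_univ, true_and] at hi hj
    have h1 : Mstar i j = Mstar j j := by rw [hi, ← hj]
    have h2 : Mstar j j = 1 - Mstar j j := hM.2.1 j j
    linarith
  have hbound : ∀ i j : Fin n, ((Mstar - fun _ _ => (1 : ℝ) / 2 : Fin n → Fin n → ℝ) i j) ^ 2 ≤
      if i ∈ Sf ∧ j ∈ Sf then 0 else 1 / 4 := by
    intro i j
    by_cases h : i ∈ Sf ∧ j ∈ Sf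
    · simp [h, Pi.sub_apply, hhalf i h.1 j h.2]
    · simp only [if_neg h, Pi.sub_apply]
      nlinarith [(hM.1 i j).1, (hM.1 i j).2]
  have hprod : ∀ i j : Fin n, (if i ∈ Sf ∧ j ∈ Sf then (0 : ℝ) else 1 / 4)
      = 1 / 4 - (if i ∈ Sf then (1 : ℝ) / 2 else 0) * (if j ∈ Sf then (1 : ℝ) / 2 else 0) := by
    intro i j
    by_cases hi : i ∈ Sf <;> by_cases hj : j ∈ Sf <;> simp [hi, hj] <;> norm_num
  have hind : ∑ j : Fin n, (if j ∈ Sf then (1 : ℝ) / 2 else 0) = (Sf.card : ℝ) / 2 := by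
    rw [Finset.sum_ite_mem, Finset.univ_inter, Finset.sum_const, nsmul_eq_mul]
    ring
  have hsum : frobSq (Mstar - fun _ _ => (1 : ℝ) / 2) ≤
      ((n : ℝ) ^ 2 - (Sf.card : ℝ) ^ 2) / 4 := by
    calc frobSq (Mstar - fun _ _ => (1 : ℝ) / 2)
        ≤ ∑ i : Fin n, ∑ j : Fin n, (if i ∈ Sf ∧ j ∈ Sf then (0 : ℝ) else 1 / 4) := by
          refine Finset.sum_le_sum fun i _ => Finset.sum_le_sum fun j _ => hbound i j
      _ = ((n : ℝ) ^ 2 - (Sf.card : ℝ) ^ 2) / 4 := by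
          simp_rw [hprod, Finset.sum_sub_distrib, ← Finset.mul_sum, hind, ← Finset.sum_mul, hind]
          simp only [Finset.sum_const, Finset.card_univ, Fintype.card_fin, nsmul_eq_mul]
          ring
  have hk0 : (0 : ℝ) ≤ (Sf.card : ℝ) := Nat.cast_nonneg _
  have hknR : (Sf.card : ℝ) ≤ (n : ℝ) := Nat.cast_le.mpr hkn
  have hnR : (2 : ℝ) ≤ (n : ℝ) := by exact_mod_cast hn
  rw [hk]
  nlinarith [hsum]

end SSTPaper
end
end

section
/- Let Y ∈ {0,1}^{n×n} be any matrix satisfying Y_{ji} = 1 − Y_{ij} for all i ≠ j. Then every least squares estimate M̂_LS ∈ argmin over M ∈ C_SST of ‖Y − M‖²_F satisfies ‖(1/2)·11ᵀ − M̂_LS‖²_F ≥ (n − 1)/4. -/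
open MeasureTheory ENNReal

noncomputable section

namespace SSTPaper

/-!
Write `H` for the matrix with all entries `1/2`. Stretching a least squares estimate `M` away
from `H` (and clipping to `[0,1]`) stays inside its SST class, so first-order optimality along
this ray gives `⟨H - M, Y - M⟩ ≥ 0`, i.e. `‖Y - M‖² ≥ ‖Y - H‖² - ‖H - M‖²`. On the other hand,
an item `a` winning at least `(n - 1)/2` of its games (one exists by averaging) yields the SST
matrix in which `a` surely beats everyone it beat in `Y` and all other comparisons are fair
coins; it fits `Y` better than `H` by half of `a`'s number of wins, hence by at least `(n - 1)/4`.
-/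

open Filter Topology Set

section

variable {n : ℕ}

theorem frobSq_sub_eq (Y M C : Fin n → Fin n → ℝ) :
    frobSq (Y - M) = frobSq (Y - C) - frobSq (C - M) + 2 * tinner (C - M) (Y - M) := by
  simp only [frobSq, tinner, Pi.sub_apply, Finset.mul_sum, ← Finset.sum_sub_distrib,
    ← Finset.sum_add_distrib]
  exact Finset.sum_congr rfl fun i _ => Finset.sum_congr rfl fun j _ => by ring

theorem mem_sstClass_of_key {α : Type*} [LinearOrder α] {M : Fin n → Fin n → ℝ}
    (hbnd : ∀ i j, 0 ≤ M i j ∧ M i j ≤ 1) (hskew : ∀ i j, M j i = 1 - M i j)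
    (ρ : Fin n → α) (hρ : ∀ i j k, ρ j ≤ ρ i → M j k ≤ M i k) : M ∈ sstClass n := by
  refine ⟨hbnd, hskew, (Tuple.sort ρ)⁻¹, fun i j k hij => hρ i j k ?_⟩
  simpa using Tuple.monotone_sort ρ hij.le

def clip (x : ℝ) : ℝ := max 0 (min 1 x)

theorem clip_mem (x : ℝ) : 0 ≤ clip x ∧ clip x ≤ 1 :=
  ⟨le_max_left _ _, max_le zero_le_one (min_le_left _ _)⟩

theorem clip_mono : Monotone clip := fun _ _ h => max_le_max le_rfl (min_le_min le_rfl h)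

theorem clip_one_sub (x : ℝ) : clip (1 - x) = 1 - clip x := by
  simp only [clip, max_def, min_def]
  split_ifs <;> linarith

theorem clip_of_mem {x : ℝ} (hx : x ∈ Icc 0 1) : clip x = x := by
  rw [clip, min_eq_right hx.2, max_eq_right hx.1]

def stretch (t : ℝ) (M : Fin n → Fin n → ℝ) : Fin n → Fin n → ℝ :=
  fun i j => clip (1 / 2 + t * (M i j - 1 / 2))

theorem stretch_mem_sstClass {t : ℝ} (ht : 0 ≤ t) {M : Fin n → Fin n → ℝ}
    (hM : M ∈ sstClass n) : stretch t M ∈ sstClass n := by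
  obtain ⟨-, hskew, π, hπ⟩ := hM
  refine ⟨fun i j => clip_mem _, fun i j => ?_, π, fun i j k h => clip_mono ?_⟩
  · rw [stretch, stretch, hskew i j, ← clip_one_sub]
    ring_nf
  · have := hπ i j k h
    gcongr

theorem eventually_sq_sub_clip_le {m y : ℝ} (hm : m ∈ Icc 0 1) (hy : y ∈ Icc 0 1) :
    ∀ᶠ δ in 𝓝[>] 0, (y - clip (1 / 2 + (1 + δ) * (m - 1 / 2))) ^ 2 ≤
      (y - m) ^ 2 + 2 * δ * ((1 / 2 - m) * (y - m)) + δ ^ 2 * (1 / 2 - m) ^ 2 := by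
  obtain ⟨hy0, hy1⟩ := hy
  rcases hm.1.eq_or_lt with rfl | hm0
  · filter_upwards [self_mem_nhdsWithin] with δ (hδ : 0 < δ)
    rw [show clip (1 / 2 + (1 + δ) * (0 - 1 / 2)) = 0 by
      rw [clip, max_eq_left (min_le_of_right_le (by linarith))]]
    nlinarith
  rcases hm.2.eq_or_lt with rfl | hm1
  · filter_upwards [self_mem_nhdsWithin] with δ (hδ : 0 < δ)
    rw [show clip (1 / 2 + (1 + δ) * (1 - 1 / 2)) = 1 by
      rw [clip, min_eq_left (by linarith), max_eq_right zero_le_one]]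
    nlinarith
  · have hlim : Tendsto (fun δ : ℝ => 1 / 2 + (1 + δ) * (m - 1 / 2)) (𝓝[>] 0) (𝓝 m) :=
      ((by fun_prop : Continuous fun δ : ℝ => 1 / 2 + (1 + δ) * (m - 1 / 2)).tendsto' 0 m
        (by ring)).mono_left nhdsWithin_le_nhds
    filter_upwards [hlim.eventually (Icc_mem_nhds hm0 hm1)] with δ hδ
    rw [clip_of_mem hδ]
    exact le_of_eq (by ring)

theorem eventually_frobSq_sub_stretch_le {Y M : Fin n → Fin n → ℝ}
    (hY : ∀ i j, Y i j ∈ Icc 0 1) (hM : ∀ i j, M i j ∈ Icc 0 1) :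
    ∀ᶠ δ in 𝓝[>] 0, frobSq (Y - stretch (1 + δ) M) ≤
      frobSq (Y - M) + 2 * δ * tinner ((fun _ _ => 1 / 2) - M) (Y - M) +
        δ ^ 2 * frobSq ((fun _ _ => 1 / 2) - M) := by
  filter_upwards [eventually_all.2 fun i => eventually_all.2 fun j =>
    eventually_sq_sub_clip_le (hM i j) (hY i j)] with δ hδ
  simp only [frobSq, tinner, stretch, Pi.sub_apply, Finset.mul_sum, ← Finset.sum_add_distrib]
  gcongr with i _ j _
  exact hδ i j

theorem tinner_half_sub_residual_nonneg {Y M : Fin n → Fin n → ℝ}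
    (hY : ∀ i j, Y i j ∈ Icc 0 1) (hM : M ∈ sstClass n)
    (hmin : ∀ M' ∈ sstClass n, frobSq (Y - M) ≤ frobSq (Y - M')) :
    0 ≤ tinner ((fun _ _ => 1 / 2) - M) (Y - M) := by
  set S := tinner ((fun _ _ => 1 / 2) - M) (Y - M)
  set Q := frobSq ((fun _ _ => (1 : ℝ) / 2) - M)
  have hδ : ∀ᶠ δ in 𝓝[>] 0, -(δ * Q) ≤ 2 * S := by
    filter_upwards [eventually_frobSq_sub_stretch_le hY hM.1, self_mem_nhdsWithin]
      with δ hδ (hpos : 0 < δ)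
    have hle := (hmin _ (stretch_mem_sstClass (by linarith) hM)).trans hδ
    have : 0 ≤ δ * (2 * S + δ * Q) := by linarith
    linarith [(mul_nonneg_iff_of_pos_left hpos).1 this]
  have hlim : Tendsto (fun δ : ℝ => -(δ * Q)) (𝓝[>] 0) (𝓝 0) :=
    ((by fun_prop : Continuous fun δ : ℝ => -(δ * Q)).tendsto' 0 0 (by simp)).mono_left
      nhdsWithin_le_nhds
  linarith [le_of_tendsto hlim hδ]

def starMatrix (a : Fin n) (v : Fin n → ℝ) : Fin n → Fin n → ℝ :=
  fun i j => 1 / 2 + ((if i = a then v j else 0) - (if j = a then v i else 0)) / 2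

theorem starMatrix_mem_sstClass (a : Fin n) {v : Fin n → ℝ} (hv : ∀ j, v j ∈ Icc 0 1) :
    starMatrix a v ∈ sstClass n := by
  refine mem_sstClass_of_key (fun i j => ?_) (fun i j => ?_)
    (fun i => if i = a then 1 else -v i) (fun i j k hij => ?_)
  · obtain ⟨hi0, hi1⟩ := hv i
    obtain ⟨hj0, hj1⟩ := hv j
    simp only [starMatrix]
    split_ifs <;> subst_vars <;> constructor <;> linarith
  · simp only [starMatrix]
    ring
  · obtain ⟨hi0, hi1⟩ := hv i
    obtain ⟨hj0, hj1⟩ := hv j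
    obtain ⟨hk0, hk1⟩ := hv k
    simp only [starMatrix] at hij ⊢
    split_ifs at hij ⊢ <;> subst_vars <;> linarith

def offDiagRow (Y : Fin n → Fin n → ℝ) (a : Fin n) : Fin n → ℝ :=
  fun j => if j = a then 0 else Y a j

theorem sq_sub_starMatrix_offDiagRow {Y : Fin n → Fin n → ℝ} (hY01 : ∀ i j, Y i j = 0 ∨ Y i j = 1)
    (hYskew : ∀ i j : Fin n, i ≠ j → Y j i = 1 - Y i j) (a i j : Fin n) :
    (Y i j - starMatrix a (offDiagRow Y a) i j) ^ 2 = (Y i j - 1 / 2) ^ 2 -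
      ((if i = a then offDiagRow Y a j else 0) + (if j = a then offDiagRow Y a i else 0)) / 4 := by
  simp only [starMatrix, offDiagRow]
  by_cases hi : i = a <;> by_cases hj : j = a
  · simp [hi, hj]
  · subst hi
    simp only [if_true, hj, if_false]
    rcases hY01 i j with h | h <;> rw [h] <;> norm_num
  · subst hj
    simp only [if_true, hi, if_false, hYskew j i (Ne.symm hi)]
    rcases hY01 j i with h | h <;> rw [h] <;> norm_num
  · simp [hi, hj]

theorem frobSq_sub_starMatrix_offDiagRow {Y : Fin n → Fin n → ℝ}
    (hY01 : ∀ i j, Y i j = 0 ∨ Y i j = 1) (hYskew : ∀ i j : Fin n, i ≠ j → Y j i = 1 - Y i j)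
    (a : Fin n) :
    frobSq (Y - starMatrix a (offDiagRow Y a)) =
      frobSq (Y - fun _ _ => 1 / 2) - (∑ j, offDiagRow Y a j) / 2 := by
  simp only [frobSq, Pi.sub_apply, sq_sub_starMatrix_offDiagRow hY01 hYskew,
    Finset.sum_sub_distrib, ← Finset.sum_div, Finset.sum_add_distrib, Finset.sum_ite_eq',
    Finset.sum_ite_irrel, Finset.sum_const_zero, Finset.mem_univ, if_true]
  ring

theorem sum_sum_offDiagRow {Y : Fin n → Fin n → ℝ}
    (hYskew : ∀ i j : Fin n, i ≠ j → Y j i = 1 - Y i j) :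
    ∑ a, ∑ j, offDiagRow Y a j = n * (n - 1) / 2 := by
  have hpair : ∀ a j, offDiagRow Y a j + offDiagRow Y j a = 1 - if j = a then 1 else 0 := by
    intro a j
    by_cases h : j = a
    · simp [offDiagRow, h]
    · simp [offDiagRow, h, Ne.symm h, hYskew a j (Ne.symm h)]
  have htwice : 2 * ∑ a, ∑ j, offDiagRow Y a j = n * n - n := by
    rw [two_mul]
    nth_rewrite 2 [Finset.sum_comm]
    simp [← Finset.sum_add_distrib, hpair, Finset.sum_sub_distrib]
  linear_combination htwice / 2

theorem offDiagRow_mem {Y : Fin n → Fin n → ℝ} (hY : ∀ i j, Y i j ∈ Icc 0 1) (a j : Fin n) :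
    offDiagRow Y a j ∈ Icc 0 1 := by
  unfold offDiagRow
  split_ifs
  exacts [left_mem_Icc.2 zero_le_one, hY a j]

theorem exists_le_sum_offDiagRow (hn : 0 < n) {Y : Fin n → Fin n → ℝ}
    (hYskew : ∀ i j : Fin n, i ≠ j → Y j i = 1 - Y i j) :
    ∃ a, ((n : ℝ) - 1) / 2 ≤ ∑ j, offDiagRow Y a j := by
  have : Nonempty (Fin n) := ⟨⟨0, hn⟩⟩
  obtain ⟨a, -, ha⟩ := Finset.exists_le_of_sum_le Finset.univ_nonempty
    (f := fun _ => ((n : ℝ) - 1) / 2) (g := fun a => ∑ j, offDiagRow Y a j)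
    (by simp [sum_sum_offDiagRow hYskew, mul_div_assoc])
  exact ⟨a, ha⟩

end

/-- for any binary skew observation matrix `Y`, every least squares estimate
over `C_SST` satisfies `‖½·11ᵀ − M̂_LS‖²_F ≥ (n − 1)/4`. -/
theorem ls_far_from_half {n : ℕ} (hn : 2 ≤ n)
    (Y : Fin n → Fin n → ℝ)
    (hY01 : ∀ i j, Y i j = 0 ∨ Y i j = 1)
    (hYskew : ∀ i j : Fin n, i ≠ j → Y j i = 1 - Y i j)
    (Mls : Fin n → Fin n → ℝ)
    (hmem : Mls ∈ sstClass n)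
    (hmin : ∀ M ∈ sstClass n, frobSq (Y - Mls) ≤ frobSq (Y - M)) :
    ((n : ℝ) - 1) / 4 ≤ frobSq ((fun _ _ => (1 : ℝ) / 2) - Mls) := by
  have hY : ∀ i j, Y i j ∈ Icc (0 : ℝ) 1 := fun i j => by
    rcases hY01 i j with h | h <;> simp [h]
  obtain ⟨a, ha⟩ := exists_le_sum_offDiagRow (by omega) hYskew
  have hstar := hmin _ (starMatrix_mem_sstClass a (offDiagRow_mem hY a))
  rw [frobSq_sub_starMatrix_offDiagRow hY01 hYskew,
    frobSq_sub_eq Y Mls (fun _ _ => 1 / 2)] at hstar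
  linarith [tinner_half_sub_residual_nonneg hY hmem hmin]

end SSTPaper
end
end

section
/- Let M* ∈ C_SST and let π̂ be any permutation of [n] such that max over i ∈ [n] of Σ_{ℓ=1}^n |M*_{iℓ} − M*_{π̂(i)ℓ}| ≤ √n·(log n)². Then Σ_{i=1}^n Σ_{ℓ=1}^n (M*_{iℓ} − M*_{π̂(i)ℓ})² ≤ 2·(n − k_max(M*))·√n·(log n)². -/
open MeasureTheory ENNReal

noncomputable section

namespace SSTPaper

/-- if a permutation `π̂` moves every item by at most `√n (log n)²` in
row-sum ℓ₁-distance, then the total squared row-permutation error is bounded as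
`Σ_i Σ_ℓ (M*_{iℓ} − M*_{π̂(i)ℓ})² ≤ 2 (n − k_max(M*)) √n (log n)²`. -/
theorem permutation_approximation_error {n : ℕ} (hn : 2 ≤ n)
    (Mstar : Fin n → Fin n → ℝ) (hM : Mstar ∈ sstClass n)
    (piHat : Equiv.Perm (Fin n))
    (hperm : ∀ i : Fin n,
      ∑ l, |Mstar i l - Mstar (piHat i) l| ≤ Real.sqrt n * (Real.log n) ^ 2) :
    ∑ i, ∑ l, (Mstar i l - Mstar (piHat i) l) ^ 2 ≤
      2 * ((n : ℝ) - kmaxM Mstar) * Real.sqrt n * (Real.log n) ^ 2 := by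
  classical
  haveI : Nonempty (Fin n) := ⟨⟨0, by omega⟩⟩
  obtain ⟨i₀, -, hi₀⟩ := Finset.exists_mem_eq_sup (Finset.univ : Finset (Fin n))
    Finset.univ_nonempty (fun i => Set.ncard {j : Fin n | Mstar j = Mstar i})
  set S : Finset (Fin n) := Finset.univ.filter (fun j => Mstar j = Mstar i₀) with hS
  have hkmax : kmaxM Mstar = S.card := by
    have hset : {j : Fin n | Mstar j = Mstar i₀} = ↑S := by ext j; simp [hS]
    rw [kmaxM, hi₀, hset, Set.ncard_coe_finset]
  have hkle : S.card ≤ n := by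
    simpa using Finset.card_le_card (Finset.subset_univ S)
  have hC : (0:ℝ) ≤ Real.sqrt n * (Real.log n) ^ 2 :=
    mul_nonneg (Real.sqrt_nonneg _) (sq_nonneg _)
  set B : Finset (Fin n) := Finset.univ.filter (fun i => ¬(i ∈ S ∧ piHat i ∈ S)) with hB
  -- inner sum bound for any i
  have hinner : ∀ i : Fin n, ∑ l, (Mstar i l - Mstar (piHat i) l) ^ 2 ≤
      Real.sqrt n * (Real.log n) ^ 2 := by
    intro i
    refine le_trans ?_ (hperm i)
    refine Finset.sum_le_sum fun l _ => ?_
    have h1 := hM.1 i l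
    have h2 := hM.1 (piHat i) l
    rcases abs_cases (Mstar i l - Mstar (piHat i) l) with ⟨h, _⟩ | ⟨h, _⟩ <;> nlinarith
  -- terms outside B vanish
  have hzero : ∀ i ∉ B, ∑ l, (Mstar i l - Mstar (piHat i) l) ^ 2 = 0 := by
    intro i hi
    have : i ∈ S ∧ piHat i ∈ S := by
      by_contra h
      exact hi (by simp only [hB, Finset.mem_filter, Finset.mem_univ, true_and]; exact h)
    obtain ⟨h1, h2⟩ := this
    have e1 : Mstar i = Mstar i₀ := by simpa [hS] using h1
    have e2 : Mstar (piHat i) = Mstar i₀ := by simpa [hS] using h2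
    simp [e1, e2]
  -- card bound on B
  have hBcard : (B.card : ℝ) ≤ 2 * ((n:ℝ) - S.card) := by
    have hsub : B ⊆ Finset.univ.filter (fun i => i ∉ S) ∪
        Finset.univ.filter (fun i => piHat i ∉ S) := by
      intro i hi
      simp only [hB, Finset.mem_filter, Finset.mem_univ, true_and] at hi
      simp only [Finset.mem_union, Finset.mem_filter, Finset.mem_univ, true_and]
      tauto
    have hc1 : (Finset.univ.filter (fun i : Fin n => i ∉ S)).card = n - S.card := by
      have : Finset.univ.filter (fun i : Fin n => i ∉ S) = Sᶜ := by ext; simp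
      rw [this, Finset.card_compl, Fintype.card_fin]
    have himg : (Finset.univ.filter (fun i => piHat i ∉ S)).image piHat =
        Finset.univ.filter (fun j : Fin n => j ∉ S) := by
      ext j
      simp only [Finset.mem_image, Finset.mem_filter, Finset.mem_univ, true_and]
      constructor
      · rintro ⟨i, hi, rfl⟩; exact hi
      · intro hj; exact ⟨piHat.symm j, by simpa using hj, by simp⟩
    have hc2 : (Finset.univ.filter (fun i : Fin n => piHat i ∉ S)).card = n - S.card := by
      rw [← Finset.card_image_of_injective _ piHat.injective, himg, hc1]
    have hcard : B.card ≤ 2 * (n - S.card) := by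
      calc B.card ≤ _ := Finset.card_le_card hsub
        _ ≤ (Finset.univ.filter (fun i : Fin n => i ∉ S)).card +
            (Finset.univ.filter (fun i : Fin n => piHat i ∉ S)).card :=
              Finset.card_union_le _ _
        _ = 2 * (n - S.card) := by rw [hc1, hc2]; ring
    calc (B.card : ℝ) ≤ ((2 * (n - S.card) : ℕ) : ℝ) := by exact_mod_cast hcard
      _ = 2 * ((n - S.card : ℕ) : ℝ) := by push_cast; ring
      _ = 2 * ((n:ℝ) - S.card) := by rw [Nat.cast_sub hkle]
  calc ∑ i, ∑ l, (Mstar i l - Mstar (piHat i) l) ^ 2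
      = ∑ i ∈ B, ∑ l, (Mstar i l - Mstar (piHat i) l) ^ 2 :=
        (Finset.sum_subset (Finset.subset_univ B) (fun i _ hi => hzero i hi)).symm
    _ ≤ ∑ _i ∈ B, Real.sqrt n * (Real.log n) ^ 2 :=
        Finset.sum_le_sum fun i _ => hinner i
    _ = (B.card : ℝ) * (Real.sqrt n * (Real.log n) ^ 2) := by
        rw [Finset.sum_const, nsmul_eq_mul]
    _ ≤ 2 * ((n:ℝ) - S.card) * (Real.sqrt n * (Real.log n) ^ 2) := by
        apply mul_le_mul_of_nonneg_right hBcard hC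
    _ = 2 * ((n : ℝ) - kmaxM Mstar) * Real.sqrt n * (Real.log n) ^ 2 := by
        rw [hkmax]; ring

end SSTPaper
end
end

section
/- For every matrix M₀ ∈ C_SST and every real number θ, the matrix obtained by clipping each entry of (1 − θ)·(M₀ − (1/2)·11ᵀ) + (1/2)·11ᵀ to the interval [0,1] (i.e., the entrywise Euclidean projection onto [0,1]^{n×n}) belongs to C_SST. -/
open MeasureTheory ENNReal

noncomputable section

namespace SSTPaper

/-- for every `M₀ ∈ C_SST` and every `θ ∈ ℝ`, entrywise clipping of
`(1 − θ)(M₀ − ½·11ᵀ) + ½·11ᵀ` to `[0,1]` yields a matrix in `C_SST`. -/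
theorem clipped_line_in_sst {n : ℕ} (hn : 2 ≤ n)
    (M0 : Fin n → Fin n → ℝ) (hM0 : M0 ∈ sstClass n) (θ : ℝ) :
    (fun i j => min 1 (max 0 ((1 - θ) * (M0 i j - 1 / 2) + 1 / 2))) ∈ sstClass n := by
  obtain ⟨hbd, hskew, π, hπ⟩ := hM0
  have clip_mono : ∀ x y : ℝ, x ≤ y → min 1 (max 0 x) ≤ min 1 (max 0 y) := fun x y h =>
    min_le_min le_rfl (max_le_max le_rfl h)
  have clip_flip : ∀ y : ℝ, min 1 (max 0 (1 - y)) = 1 - min 1 (max 0 y) := by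
    intro y
    rcases le_total y 0 with h | h <;> rcases le_total 1 y with h' | h' <;>
      simp [min_def, max_def] <;> split_ifs <;> linarith
  refine ⟨fun i j => ⟨le_min (by norm_num) (le_max_left _ _), min_le_left _ _⟩, ?_, ?_⟩
  · intro i j
    have : (1 - θ) * (M0 j i - 1 / 2) + 1 / 2 =
        1 - ((1 - θ) * (M0 i j - 1 / 2) + 1 / 2) := by
      rw [hskew i j]; ring
    simp only []
    show (1:ℝ) ⊓ (0 ⊔ ((1 - θ) * (M0 j i - 1 / 2) + 1 / 2)) = _
    rw [this, clip_flip]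
  · rcases le_total 0 (1 - θ) with hc | hc
    · exact ⟨π, fun i j k h => clip_mono _ _ (by nlinarith [hπ i j k h])⟩
    · refine ⟨π.trans Fin.revPerm, fun i j k h => ?_⟩
      have h' : π i < π j := by simpa [Fin.rev_lt_rev] using h
      have := hπ j i k h'
      exact clip_mono _ _ (by nlinarith)

end SSTPaper
end
end
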